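/- arXiv:2511.17067 — 7 statements merged into one kernel-verified Lean document; each statement's English description precedes it below -/
import Mathlib

section
/- Let A⁰ be an n×n complex matrix, λ⁰ ∈ ℂ, and ν a positive integer such that (A⁰ − λ⁰I)^ν = 0. Let A¹ be an n×n complex matrix with ‖A¹‖ ≤ 1 and let 0 < ϰ ≤ 1. Then every eigenvalue λ of A⁰ + ϰA¹ satisfies |λ − λ⁰|^ν ≤ (1 + ‖A⁰ − λ⁰I‖)^ν · ϰ; in particular |λ − λ⁰| ≤ (1 + ‖A⁰ − λ⁰I‖) · ϰ^{1/ν}. -/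
set_option maxHeartbeats 1000000
set_option synthInstance.maxHeartbeats 1000000

/-- The L2 operator norm (largest singular value) of a complex square matrix. -/
noncomputable def l2OpNorm {n : ℕ} (M : Matrix (Fin n) (Fin n) ℂ) : ℝ :=
  ‖Matrix.toEuclideanCLM (𝕜 := ℂ) M‖

/-- Norm of `(a+b)^m - a^m` in a normed ring. -/
lemma pow_sub_pow_norm_le {R : Type*} [NormedRing R] (a b : R) :
    ∀ m : ℕ, ‖(a + b) ^ m - a ^ m‖ ≤ (‖a‖ + ‖b‖) ^ m - ‖a‖ ^ m := by
  intro m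
  induction m with
  | zero => simp
  | succ k ih =>
    have key : (a + b) ^ (k + 1) - a ^ (k + 1)
        = ((a + b) ^ k - a ^ k) * (a + b) + a ^ k * b := by
      rw [pow_succ, pow_succ]; noncomm_ring
    have hak : ‖a ^ k * b‖ ≤ ‖a‖ ^ k * ‖b‖ := by
      rcases k with _ | k
      · simp
      · calc ‖a ^ (k+1) * b‖ ≤ ‖a ^ (k+1)‖ * ‖b‖ := norm_mul_le _ _
          _ ≤ ‖a‖ ^ (k+1) * ‖b‖ := by
              gcongr
              exact norm_pow_le' a k.succ_pos
    have hsub : (0:ℝ) ≤ (‖a‖ + ‖b‖) ^ k - ‖a‖ ^ k :=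
      sub_nonneg.mpr (pow_le_pow_left₀ (norm_nonneg a)
        (le_add_of_nonneg_right (norm_nonneg b)) k)
    rw [key]
    calc ‖((a + b) ^ k - a ^ k) * (a + b) + a ^ k * b‖
        ≤ ‖((a + b) ^ k - a ^ k) * (a + b)‖ + ‖a ^ k * b‖ := norm_add_le _ _
      _ ≤ ‖(a + b) ^ k - a ^ k‖ * ‖a + b‖ + ‖a‖ ^ k * ‖b‖ := by
          gcongr
          exact norm_mul_le _ _
      _ ≤ ((‖a‖ + ‖b‖) ^ k - ‖a‖ ^ k) * (‖a‖ + ‖b‖) + ‖a‖ ^ k * ‖b‖ := by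
          gcongr
          · exact norm_add_le _ _
      _ = (‖a‖ + ‖b‖) ^ (k+1) - ‖a‖ ^ (k+1) := by ring

/-- Binomial bound: `(s+ϰ)^ν - s^ν ≤ ϰ * ((1+s)^ν - s^ν)` for `0 ≤ s`, `0 ≤ ϰ ≤ 1`. -/
lemma scalar_bound_aux (s ϰ : ℝ) (hs : 0 ≤ s) (hϰ0 : 0 ≤ ϰ) (hϰ1 : ϰ ≤ 1) (ν : ℕ) :
    (s + ϰ) ^ ν - s ^ ν ≤ ϰ * ((1 + s) ^ ν - s ^ ν) := by
  induction ν with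
  | zero => simp
  | succ k ih =>
    have h1 : (s + ϰ) ^ (k+1) - s ^ (k+1)
        = ((s + ϰ) ^ k - s ^ k) * (s + ϰ) + s ^ k * ϰ := by ring
    have h3 : s + ϰ ≤ 1 + s := by linarith
    have h4 : s ^ k ≤ (1 + s) ^ k := pow_le_pow_left₀ hs (by linarith) k
    have h5 : ((s + ϰ) ^ k - s ^ k) * (s + ϰ) ≤ ϰ * ((1 + s) ^ k - s ^ k) * (1 + s) :=
      mul_le_mul ih h3 (by positivity) (mul_nonneg hϰ0 (sub_nonneg.mpr h4))
    calc (s + ϰ) ^ (k+1) - s ^ (k+1)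
        = ((s + ϰ) ^ k - s ^ k) * (s + ϰ) + s ^ k * ϰ := h1
      _ ≤ ϰ * ((1 + s) ^ k - s ^ k) * (1 + s) + s ^ k * ϰ := by linarith
      _ = ϰ * ((1 + s) ^ (k+1) - s ^ (k+1)) := by ring
  
lemma scalar_bound (s ϰ : ℝ) (hs : 0 ≤ s) (hϰ0 : 0 ≤ ϰ) (hϰ1 : ϰ ≤ 1) (ν : ℕ) :
    (s + ϰ) ^ ν - s ^ ν ≤ (1 + s) ^ ν * ϰ := by
  calc (s + ϰ) ^ ν - s ^ ν ≤ ϰ * ((1 + s) ^ ν - s ^ ν) :=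
        scalar_bound_aux s ϰ hs hϰ0 hϰ1 ν
    _ ≤ ϰ * (1 + s) ^ ν := by nlinarith [pow_nonneg hs ν]
    _ = (1 + s) ^ ν * ϰ := mul_comm _ _

/-- quantitative `ϰ^{1/ν}` eigenvalue-deviation bound when
`(A⁰ − λ⁰I)^ν = 0`, `‖A¹‖ ≤ 1` and `0 < ϰ ≤ 1`. -/
theorem eigenvalue_deviation_bound_nilpotent_case
    {n : ℕ} (A0 A1 : Matrix (Fin n) (Fin n) ℂ) (lam0 : ℂ) (ν : ℕ) (hν : 0 < ν)
    (hnil : (A0 - lam0 • (1 : Matrix (Fin n) (Fin n) ℂ)) ^ ν = 0)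
    (hA1 : l2OpNorm A1 ≤ 1)
    (ϰ : ℝ) (hϰ0 : 0 < ϰ) (hϰ1 : ϰ ≤ 1)
    (lam : ℂ) (hlam : ∃ v : Fin n → ℂ, v ≠ 0 ∧ (A0 + (ϰ : ℂ) • A1).mulVec v = lam • v) :
    ‖lam - lam0‖ ^ ν
        ≤ (1 + l2OpNorm (A0 - lam0 • (1 : Matrix (Fin n) (Fin n) ℂ))) ^ ν * ϰ ∧
    ‖lam - lam0‖
        ≤ (1 + l2OpNorm (A0 - lam0 • (1 : Matrix (Fin n) (Fin n) ℂ))) * ϰ ^ ((ν : ℝ)⁻¹) := by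
  obtain ⟨v, hv, hmv⟩ := hlam
  set N := A0 - lam0 • (1 : Matrix (Fin n) (Fin n) ℂ) with hN
  set M := N + (ϰ : ℂ) • A1 with hM
  set μ := lam - lam0 with hμ
  -- M.mulVec v = μ • v
  have hMv : M.mulVec v = μ • v := by
    have hNv : N.mulVec v = A0.mulVec v - lam0 • v := by
      simp [hN, Matrix.sub_mulVec, Matrix.smul_mulVec, Matrix.one_mulVec]
    have hA : A0.mulVec v + ((ϰ : ℂ) • A1).mulVec v = lam • v := by
      rw [← Matrix.add_mulVec]; exact hmv
    simp only [hM, Matrix.add_mulVec, hNv, hμ, sub_smul]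
    linear_combination (norm := module) hA
  -- powers
  have hMpow : ∀ k : ℕ, (M ^ k).mulVec v = μ ^ k • v := by
    intro k
    induction k with
    | zero => simp
    | succ j ih =>
      rw [pow_succ, ← Matrix.mulVec_mulVec, hMv, Matrix.mulVec_smul, ih,
        smul_smul, mul_comm, ← pow_succ]
  -- pass to CLM
  set T := Matrix.toEuclideanCLM (𝕜 := ℂ) M with hT
  set S := Matrix.toEuclideanCLM (𝕜 := ℂ) N with hS
  set x : EuclideanSpace ℂ (Fin n) := (WithLp.equiv 2 (Fin n → ℂ)).symm v with hx
  have hxne : x ≠ 0 := by simpa [hx] using hv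
  have hTx : (T ^ ν) x = μ ^ ν • x := by
    have h1 : (T ^ ν) x = (Matrix.toEuclideanCLM (𝕜 := ℂ) (M ^ ν)) x := by
      rw [map_pow]
    rw [h1, hx]
    show WithLp.toLp 2 ((M ^ ν).mulVec v) = _
    rw [hMpow]
    rfl
  -- |μ|^ν ≤ ‖T^ν‖
  have hμν : ‖μ‖ ^ ν ≤ ‖T ^ ν‖ := by
    have h1 : ‖(T ^ ν) x‖ ≤ ‖T ^ ν‖ * ‖x‖ := (T ^ ν).le_opNorm x
    rw [hTx, norm_smul] at h1
    have hxpos : 0 < ‖x‖ := norm_pos_iff.mpr hxne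
    have h2 := (mul_le_mul_iff_left₀ hxpos).mp h1
    simpa using h2
  -- ‖T^ν‖ ≤ (‖S‖+ϰ)^ν - ‖S‖^ν
  have hSν : S ^ ν = 0 := by
    rw [hS, ← map_pow, hnil, map_zero]
  have hTS : T = S + (ϰ : ℂ) • Matrix.toEuclideanCLM (𝕜 := ℂ) A1 := by
    rw [hT, hS, hM, map_add, map_smul]
  have hϰA1 : ‖(ϰ : ℂ) • Matrix.toEuclideanCLM (𝕜 := ℂ) A1‖ ≤ ϰ := by
    have hns := norm_smul ((ϰ:ℂ)) (Matrix.toEuclideanCLM (𝕜 := ℂ) A1)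
    have hc : ‖(ϰ : ℂ)‖ = ϰ := by
      simp [abs_of_pos hϰ0]
    rw [hns, hc]
    calc ϰ * ‖Matrix.toEuclideanCLM (𝕜 := ℂ) A1‖ ≤ ϰ * 1 :=
          mul_le_mul_of_nonneg_left hA1 hϰ0.le
      _ = ϰ := mul_one ϰ
  have hnorm : ‖T ^ ν‖ ≤ (‖S‖ + ϰ) ^ ν - ‖S‖ ^ ν := by
    have h1 : ‖T ^ ν - S ^ ν‖
        ≤ (‖S‖ + ‖(ϰ : ℂ) • Matrix.toEuclideanCLM (𝕜 := ℂ) A1‖) ^ ν - ‖S‖ ^ ν := by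
      rw [hTS]
      exact pow_sub_pow_norm_le S _ ν
    rw [hSν, sub_zero] at h1
    refine h1.trans ?_
    have := pow_le_pow_left₀ (by positivity : (0:ℝ) ≤ ‖S‖ + ‖(ϰ : ℂ) • Matrix.toEuclideanCLM (𝕜 := ℂ) A1‖)
      (by linarith : ‖S‖ + ‖(ϰ : ℂ) • Matrix.toEuclideanCLM (𝕜 := ℂ) A1‖ ≤ ‖S‖ + ϰ) ν
    linarith
  have hmain : ‖μ‖ ^ ν ≤ (1 + ‖S‖) ^ ν * ϰ := by
    calc ‖μ‖ ^ ν ≤ ‖T ^ ν‖ := hμν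
      _ ≤ (‖S‖ + ϰ) ^ ν - ‖S‖ ^ ν := hnorm
      _ ≤ (1 + ‖S‖) ^ ν * ϰ := scalar_bound ‖S‖ ϰ (norm_nonneg S) hϰ0.le hϰ1 ν
  have hSnorm : l2OpNorm (A0 - lam0 • (1 : Matrix (Fin n) (Fin n) ℂ)) = ‖S‖ := rfl
  constructor
  · rw [hSnorm]; exact hmain
  · rw [hSnorm]
    set C := 1 + ‖S‖ with hC
    have hC1 : (1:ℝ) ≤ C := le_add_of_nonneg_right (norm_nonneg S)
    have hC0 : (0:ℝ) < C := lt_of_lt_of_le one_pos hC1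
    have habs : (0:ℝ) ≤ ‖μ‖ := norm_nonneg μ
    have hνR : (0:ℝ) < (ν : ℝ) := by exact_mod_cast hν
    have key : (‖μ‖ ^ ν : ℝ) ^ ((ν : ℝ)⁻¹) ≤ (C ^ ν * ϰ) ^ ((ν : ℝ)⁻¹) :=
      Real.rpow_le_rpow (by positivity) hmain (by positivity)
    have lhs_eq : (‖μ‖ ^ ν : ℝ) ^ ((ν : ℝ)⁻¹) = ‖μ‖ := by
      rw [← Real.rpow_natCast ‖μ‖ ν, ← Real.rpow_mul habs,
        mul_inv_cancel₀ (ne_of_gt hνR), Real.rpow_one]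
    have rhs_eq : (C ^ ν * ϰ) ^ ((ν : ℝ)⁻¹) = C * ϰ ^ ((ν : ℝ)⁻¹) := by
      rw [Real.mul_rpow (by positivity) hϰ0.le]
      congr 1
      rw [← Real.rpow_natCast C ν, ← Real.rpow_mul hC0.le,
        mul_inv_cancel₀ (ne_of_gt hνR), Real.rpow_one]
    rw [lhs_eq, rhs_eq] at key
    exact key
end

section
/- Let A⁰ be an n×n complex matrix and let λ⁰ be an eigenvalue of A⁰ of index ν. Then there exist constants K > 0 and δ > 0 such that for every n×n complex matrix E with ‖E‖ ≤ δ and every eigenvalue λ of A⁰ + E with |λ − λ⁰| ≤ δ, one has |λ − λ⁰|^ν ≤ K‖E‖ (equivalently |λ − λ⁰| ≤ K^{1/ν} ‖E‖^{1/ν}). -/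
/-- Iteration bound: if `N y = μ • y - e` with `‖μ‖ ≤ 1`, then
`‖μ^k • y - N^k y‖ ≤ k (1+‖N‖)^k ‖e‖`. -/
lemma iter_bound {V : Type*} [NormedAddCommGroup V] [NormedSpace ℂ V]
    (N : V →L[ℂ] V) (μ : ℂ) (hμ : ‖μ‖ ≤ 1) (y e : V) (hy : N y = μ • y - e) :
    ∀ k : ℕ, ‖μ ^ k • y - (N ^ k) y‖ ≤ k * (1 + ‖N‖) ^ k * ‖e‖ := by
  intro k
  induction k with
  | zero => simp
  | succ k ih =>
    have hNe : (N ^ (k + 1)) y = N ((N ^ k) y) := by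
      rw [pow_succ']; rfl
    have key : μ ^ (k + 1) • y - (N ^ (k + 1)) y
        = N (μ ^ k • y - (N ^ k) y) + μ ^ k • e := by
      rw [map_sub, map_smul, hy, smul_sub, hNe, pow_succ, mul_smul, smul_comm]
      abel
    have h1 : ‖N (μ ^ k • y - (N ^ k) y)‖ ≤ ‖N‖ * (k * (1 + ‖N‖) ^ k * ‖e‖) :=
      (N.le_opNorm _).trans (by
        apply mul_le_mul_of_nonneg_left ih (norm_nonneg N))
    have h2 : ‖μ ^ k • e‖ ≤ 1 * ‖e‖ := by
      rw [norm_smul, norm_pow]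
      apply mul_le_mul_of_nonneg_right _ (norm_nonneg e)
      exact pow_le_one₀ (norm_nonneg μ) hμ
    have hC1 : (1 : ℝ) ≤ (1 + ‖N‖) ^ (k + 1) := one_le_pow₀ (by linarith [norm_nonneg N])
    have hCk : (0 : ℝ) ≤ (1 + ‖N‖) ^ k := by positivity
    have hCs : (1 + ‖N‖) ^ (k + 1) = (1 + ‖N‖) ^ k * (1 + ‖N‖) := pow_succ _ _
    have hk0 : (0 : ℝ) ≤ (k : ℝ) := Nat.cast_nonneg k
    have := norm_add_le (N (μ ^ k • y - (N ^ k) y)) (μ ^ k • e)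
    rw [← key] at this
    rw [Nat.cast_succ]
    have hNn : (0 : ℝ) ≤ ‖N‖ := norm_nonneg N
    have he : (0 : ℝ) ≤ ‖e‖ := norm_nonneg e
    have h3 : ‖N‖ * ((k : ℝ) * (1 + ‖N‖) ^ k * ‖e‖) ≤ (k : ℝ) * (1 + ‖N‖) ^ (k + 1) * ‖e‖ := by
      rw [hCs]; nlinarith [mul_nonneg (mul_nonneg hk0 hCk) he]
    have h4 : 1 * ‖e‖ ≤ (1 + ‖N‖) ^ (k + 1) * ‖e‖ := by nlinarith
    linarith


set_option synthInstance.maxHeartbeats 1000000 in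
set_option maxHeartbeats 4000000 in
/-- if `λ⁰` is an eigenvalue of `A⁰` of index `ν` (the smallest positive
integer for which `ker((A⁰ − λ⁰I)^ν) = ker((A⁰ − λ⁰I)^{ν+1})`), then eigenvalues of
`A⁰ + E` near `λ⁰` satisfy `|λ − λ⁰|^ν ≤ K‖E‖`. -/
theorem perturbed_eigenvalue_upper_bound_at_index_nu
    {n : ℕ} (A0 : Matrix (Fin n) (Fin n) ℂ) (lam0 : ℂ) (ν : ℕ)
    (heig : ∃ v : Fin n → ℂ, v ≠ 0 ∧ A0.mulVec v = lam0 • v)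
    (hind : IsLeast {k : ℕ | 0 < k ∧ ∀ v : Fin n → ℂ,
        ((A0 - lam0 • (1 : Matrix (Fin n) (Fin n) ℂ)) ^ k).mulVec v = 0 ↔
        ((A0 - lam0 • (1 : Matrix (Fin n) (Fin n) ℂ)) ^ (k + 1)).mulVec v = 0} ν) :
    ∃ K > (0 : ℝ), ∃ δ > (0 : ℝ), ∀ E : Matrix (Fin n) (Fin n) ℂ, l2OpNorm E ≤ δ →
      ∀ lam : ℂ, (∃ v : Fin n → ℂ, v ≠ 0 ∧ (A0 + E).mulVec v = lam • v) →
        ‖lam - lam0‖ ≤ δ →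
        ‖lam - lam0‖ ^ ν ≤ K * l2OpNorm E := by
  classical
  set B : Matrix (Fin n) (Fin n) ℂ := A0 - lam0 • 1 with hBdef
  set Ncl : EuclideanSpace ℂ (Fin n) →L[ℂ] EuclideanSpace ℂ (Fin n) :=
    Matrix.toEuclideanCLM (𝕜 := ℂ) B with hNcl
  set N' : Module.End ℂ (EuclideanSpace ℂ (Fin n)) := Ncl.toLinearMap with hN'
  -- powers agree
  have hpowapp : ∀ (k : ℕ) (u : EuclideanSpace ℂ (Fin n)), (N' ^ k) u = (Ncl ^ k) u := by
    intro k u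
    rw [hN']
    exact congrArg (fun f => f u) (ContinuousLinearMap.toLinearMap_pow Ncl k).symm
  have hpowmat : ∀ (k : ℕ), (Ncl ^ k) = Matrix.toEuclideanCLM (𝕜 := ℂ) (B ^ k) := by
    intro k; rw [map_pow]
  -- zero iff via the equiv
  have hzero : ∀ y : EuclideanSpace ℂ (Fin n), y = 0 ↔ WithLp.equiv 2 (Fin n → ℂ) y = 0 := by
    intro y
    constructor
    · rintro rfl; simp
    · intro h
      apply (WithLp.equiv 2 (Fin n → ℂ)).injective
      simpa using h
  have happ : ∀ (M : Matrix (Fin n) (Fin n) ℂ) (x : EuclideanSpace ℂ (Fin n)),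
      WithLp.equiv 2 (Fin n → ℂ) ((Matrix.toEuclideanCLM (𝕜 := ℂ) M) x)
        = M.mulVec (WithLp.equiv 2 (Fin n → ℂ) x) := by
    intro M x
    exact Matrix.ofLp_toEuclideanCLM M x
  have hMzero : ∀ (M : Matrix (Fin n) (Fin n) ℂ) (x : EuclideanSpace ℂ (Fin n)),
      (Matrix.toEuclideanCLM (𝕜 := ℂ) M) x = 0 ↔
        M.mulVec (WithLp.equiv 2 (Fin n → ℂ) x) = 0 := by
    intro M x
    rw [← happ M x]
    exact hzero _
  -- translate the kernel-stabilization hypothesis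
  have hker : LinearMap.ker (N' ^ ν) = LinearMap.ker (N' ^ (ν + 1)) := by
    ext x
    simp only [LinearMap.mem_ker]
    rw [hpowapp, hpowapp, hpowmat, hpowmat]
    exact (hMzero _ _).trans ((hind.1.2 _).trans (hMzero _ _).symm)
  -- Fitting decomposition
  obtain ⟨m, hm⟩ := Filter.eventually_atTop.mp N'.eventually_isCompl_ker_pow_range_pow
  set M : ℕ := max m (ν + 1) with hMdef
  have hMν : ν ≤ M := le_trans (Nat.le_succ ν) (le_max_right _ _)
  have hM1 : 1 ≤ M := le_trans (Nat.succ_le_succ (Nat.zero_le ν)) (le_max_right _ _)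
  have hcompl : IsCompl (LinearMap.ker (N' ^ M)) (LinearMap.range (N' ^ M)) :=
    hm M (le_max_left _ _)
  set K : Submodule ℂ (EuclideanSpace ℂ (Fin n)) := LinearMap.ker (N' ^ M) with hKdef
  set R : Submodule ℂ (EuclideanSpace ℂ (Fin n)) := LinearMap.range (N' ^ M) with hRdef
  have hstab : LinearMap.ker (N' ^ ν) = K := by
    rw [hKdef]
    have := Module.End.ker_pow_constant hker (M - ν)
    rwa [Nat.add_sub_cancel' hMν] at this
  -- invariance
  have hKinv : ∀ w ∈ K, N' w ∈ K := by
    intro w hw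
    simp only [hKdef, LinearMap.mem_ker] at hw ⊢
    have h1 : (N' ^ M) (N' w) = N' ((N' ^ M) w) := by
      rw [← Module.End.mul_apply, ← Module.End.mul_apply, ← pow_succ, ← pow_succ']
    rw [h1, hw, map_zero]
  have hRinv : ∀ w ∈ R, N' w ∈ R := by
    intro w hw
    obtain ⟨u, rfl⟩ := hw
    refine ⟨N' u, ?_⟩
    rw [← Module.End.mul_apply, ← Module.End.mul_apply, ← pow_succ, ← pow_succ']
  -- nilpotency on K
  have hnilp : ∀ w ∈ K, (N' ^ ν) w = 0 := by
    intro w hw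
    rw [← hstab] at hw
    exact hw
  -- projections
  set Pl : EuclideanSpace ℂ (Fin n) →ₗ[ℂ] EuclideanSpace ℂ (Fin n) :=
    K.subtype ∘ₗ (K.projectionOnto R hcompl) with hPl
  set Ql : EuclideanSpace ℂ (Fin n) →ₗ[ℂ] EuclideanSpace ℂ (Fin n) :=
    R.subtype ∘ₗ (R.projectionOnto K hcompl.symm) with hQl
  have hPQ : ∀ x, Pl x + Ql x = x := by
    intro x
    simpa [hPl, hQl] using Submodule.projection_add_projection_eq_self hcompl x
  have hPmem : ∀ x, Pl x ∈ K := fun x => (K.projectionOnto R hcompl x).2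
  have hQmem : ∀ x, Ql x ∈ R := fun x => (R.projectionOnto K hcompl.symm x).2
  have hPleft : ∀ w ∈ K, Pl w = w := by
    intro w hw
    exact congrArg Subtype.val (Submodule.projectionOnto_apply_of_mem_left hcompl hw)
  have hPright : ∀ w ∈ R, Pl w = 0 := by
    intro w hw
    exact congrArg Subtype.val (Submodule.projectionOnto_apply_of_mem_right hcompl hw)
  have hQleft : ∀ w ∈ R, Ql w = w := by
    intro w hw
    exact congrArg Subtype.val (Submodule.projectionOnto_apply_of_mem_left hcompl.symm hw)
  have hQright : ∀ w ∈ K, Ql w = 0 := by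
    intro w hw
    exact congrArg Subtype.val (Submodule.projectionOnto_apply_of_mem_right hcompl.symm hw)
  -- commutation with N'
  have hPN : ∀ u, Pl (N' u) = N' (Pl u) := by
    intro u
    conv_lhs => rw [← hPQ u]
    rw [map_add, map_add, hPleft _ (hKinv _ (hPmem u)), hPright _ (hRinv _ (hQmem u)), add_zero]
  have hQN : ∀ u, Ql (N' u) = N' (Ql u) := by
    intro u
    conv_lhs => rw [← hPQ u]
    rw [map_add, map_add, hQleft _ (hRinv _ (hQmem u)), hQright _ (hKinv _ (hPmem u)), zero_add]
  -- continuous versions and their norms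
  set Pc : EuclideanSpace ℂ (Fin n) →L[ℂ] EuclideanSpace ℂ (Fin n) :=
    LinearMap.toContinuousLinearMap Pl with hPc
  set Qc : EuclideanSpace ℂ (Fin n) →L[ℂ] EuclideanSpace ℂ (Fin n) :=
    LinearMap.toContinuousLinearMap Ql with hQc
  have hPcapp : ∀ x, Pc x = Pl x := fun x => rfl
  have hQcapp : ∀ x, Qc x = Ql x := fun x => rfl
  -- lower bound on R
  have hNRmap : ∀ x ∈ R, N' x ∈ R := hRinv
  set NR : R →ₗ[ℂ] R := N'.restrict hNRmap with hNR
  have hNRapp : ∀ w : R, ((NR w : EuclideanSpace ℂ (Fin n))) = N' (w : EuclideanSpace ℂ (Fin n)) :=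
    fun w => rfl
  have hNRinj : Function.Injective NR := by
    rw [← LinearMap.ker_eq_bot, LinearMap.ker_eq_bot']
    intro w hw
    have hcoe : N' (w : EuclideanSpace ℂ (Fin n)) = 0 := by
      rw [← hNRapp w, hw]; rfl
    have hwK : (w : EuclideanSpace ℂ (Fin n)) ∈ K := by
      simp only [hKdef, LinearMap.mem_ker]
      have hMeq : N' ^ M = N' ^ (M - 1) * N' := by
        rw [← pow_succ]
        congr 1
        omega
      rw [hMeq, Module.End.mul_apply, hcoe, map_zero]
    have := Submodule.disjoint_def.mp hcompl.disjoint _ hwK w.2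
    exact Subtype.ext this
  have hNRsurj : Function.Surjective NR := LinearMap.injective_iff_surjective.mp hNRinj
  set eR : R ≃ₗ[ℂ] R := LinearEquiv.ofBijective NR ⟨hNRinj, hNRsurj⟩ with heR
  set eRc : R ≃L[ℂ] R := eR.toContinuousLinearEquiv with heRc
  set c : ℝ := ‖(eRc.symm : R →L[ℂ] R)‖ with hc
  have hc0 : 0 ≤ c := hc ▸ ContinuousLinearMap.opNorm_nonneg _
  have hclow : ∀ w : R, ‖(w : EuclideanSpace ℂ (Fin n))‖ ≤ c * ‖N' (w : EuclideanSpace ℂ (Fin n))‖ := by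
    intro w
    have h1 : w = eRc.symm (eRc w) := (eRc.symm_apply_apply w).symm
    have h2 : ‖eRc.symm (eRc w)‖ ≤ c * ‖eRc w‖ := (eRc.symm : R →L[ℂ] R).le_opNorm _
    have h3 : ‖eRc w‖ = ‖N' (w : EuclideanSpace ℂ (Fin n))‖ := by
      have : (eRc w : EuclideanSpace ℂ (Fin n)) = N' (w : EuclideanSpace ℂ (Fin n)) := hNRapp w
      rw [← this]
      rfl
    calc ‖(w : EuclideanSpace ℂ (Fin n))‖ = ‖w‖ := rfl
      _ = ‖eRc.symm (eRc w)‖ := by rw [← h1]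
      _ ≤ c * ‖eRc w‖ := h2
      _ = c * ‖N' (w : EuclideanSpace ℂ (Fin n))‖ := by rw [h3]
  -- constants
  set Cp : ℝ := ‖Pc‖ with hCp
  set Cq : ℝ := ‖Qc‖ with hCq
  have hCp0 : 0 ≤ Cp := hCp ▸ ContinuousLinearMap.opNorm_nonneg _
  have hCq0 : 0 ≤ Cq := hCq ▸ ContinuousLinearMap.opNorm_nonneg _
  have hpow0 : (0:ℝ) ≤ (ν : ℝ) * (1 + ‖Ncl‖) ^ ν :=
    mul_nonneg (Nat.cast_nonneg ν) (by positivity)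
  have hK0 : (0:ℝ) < (ν : ℝ) * (1 + ‖Ncl‖) ^ ν * Cp + 2 * c * Cq + 1 := by
    have h1 : (0:ℝ) ≤ (ν : ℝ) * (1 + ‖Ncl‖) ^ ν * Cp := mul_nonneg hpow0 hCp0
    have h2 : (0:ℝ) ≤ 2 * c * Cq := mul_nonneg (by linarith) hCq0
    linarith
  refine ⟨(ν : ℝ) * (1 + ‖Ncl‖) ^ ν * Cp + 2 * c * Cq + 1, hK0,
    min 1 (1 / (2 * (c + 1))), lt_min one_pos (by positivity), ?_⟩
  rintro E hE lam ⟨v, hv0, hveq⟩ hlam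
  set F : EuclideanSpace ℂ (Fin n) →L[ℂ] EuclideanSpace ℂ (Fin n) :=
    Matrix.toEuclideanCLM (𝕜 := ℂ) E with hF
  have hFnorm : l2OpNorm E = ‖F‖ := rfl
  have hF0 : 0 ≤ ‖F‖ := ContinuousLinearMap.opNorm_nonneg _
  set x : EuclideanSpace ℂ (Fin n) := (WithLp.equiv 2 (Fin n → ℂ)).symm v with hx
  have hxv : WithLp.equiv 2 (Fin n → ℂ) x = v := Equiv.apply_symm_apply _ _
  have hx0 : x ≠ 0 := by
    intro h
    apply hv0
    rw [← hxv, h]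
    simp
  have hxpos : 0 < ‖x‖ := norm_pos_iff.mpr hx0
  have hμ1 : ‖lam - lam0‖ ≤ 1 := le_trans hlam (min_le_left _ _)
  have hδc : ‖lam - lam0‖ ≤ 1 / (2 * (c + 1)) := le_trans hlam (min_le_right _ _)
  -- the eigen-equation in Euclidean space
  have hmat : (B + E).mulVec v = (lam - lam0) • v := by
    have hBE : B + E = (A0 + E) - lam0 • 1 := by
      rw [hBdef]; abel
    rw [hBE, Matrix.sub_mulVec, hveq, Matrix.smul_mulVec, Matrix.one_mulVec, ← sub_smul]
  have hNx : Ncl x = (lam - lam0) • x - F x := by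
    have hsum : Ncl x + F x = (lam - lam0) • x := by
      have h1 : Ncl x + F x = (Matrix.toEuclideanCLM (𝕜 := ℂ) (B + E)) x := by
        rw [map_add]; rfl
      rw [h1]
      apply (WithLp.equiv 2 (Fin n → ℂ)).injective
      rw [happ, hxv, hmat]; rfl
    linear_combination (norm := module) hsum
  -- component on K
  have hyeq : Ncl (Pl x) = (lam - lam0) • Pl x - Pl (F x) := by
    calc Ncl (Pl x) = N' (Pl x) := rfl
      _ = Pl (N' x) := (hPN x).symm
      _ = Pl (Ncl x) := rfl
      _ = Pl ((lam - lam0) • x - F x) := by rw [hNx]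
      _ = (lam - lam0) • Pl x - Pl (F x) := by rw [map_sub, map_smul]
  have hbdy := iter_bound Ncl (lam - lam0) hμ1 (Pl x) (Pl (F x)) hyeq ν
  have hNν : (Ncl ^ ν) (Pl x) = 0 := by
    rw [← hpowapp]
    exact hnilp _ (hPmem x)
  rw [hNν, sub_zero, norm_smul, norm_pow] at hbdy
  have hPFx : ‖Pl (F x)‖ ≤ Cp * (‖F‖ * ‖x‖) := by
    calc ‖Pl (F x)‖ = ‖Pc (F x)‖ := rfl
      _ ≤ Cp * ‖F x‖ := Pc.le_opNorm _
      _ ≤ Cp * (‖F‖ * ‖x‖) := mul_le_mul_of_nonneg_left (F.le_opNorm _) hCp0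
  have hyb : ‖lam - lam0‖ ^ ν * ‖Pl x‖ ≤ (ν : ℝ) * (1 + ‖Ncl‖) ^ ν * (Cp * (‖F‖ * ‖x‖)) :=
    hbdy.trans (mul_le_mul_of_nonneg_left hPFx hpow0)
  -- component on R
  have hzeq : Ncl (Ql x) = (lam - lam0) • Ql x - Ql (F x) := by
    calc Ncl (Ql x) = N' (Ql x) := rfl
      _ = Ql (N' x) := (hQN x).symm
      _ = Ql (Ncl x) := rfl
      _ = Ql ((lam - lam0) • x - F x) := by rw [hNx]
      _ = (lam - lam0) • Ql x - Ql (F x) := by rw [map_sub, map_smul]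
  have hzlow : ‖Ql x‖ ≤ c * ‖Ncl (Ql x)‖ := hclow ⟨Ql x, hQmem x⟩
  have hQFx : ‖Ql (F x)‖ ≤ Cq * (‖F‖ * ‖x‖) := by
    calc ‖Ql (F x)‖ = ‖Qc (F x)‖ := rfl
      _ ≤ Cq * ‖F x‖ := Qc.le_opNorm _
      _ ≤ Cq * (‖F‖ * ‖x‖) := mul_le_mul_of_nonneg_left (F.le_opNorm _) hCq0
  have hzb : ‖Ql x‖ ≤ 2 * c * (Cq * (‖F‖ * ‖x‖)) := by
    have h1 : ‖Ncl (Ql x)‖ ≤ ‖lam - lam0‖ * ‖Ql x‖ + ‖Ql (F x)‖ := by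
      rw [hzeq]
      exact (norm_sub_le _ _).trans (by rw [norm_smul])
    have h2 : c * ‖lam - lam0‖ ≤ 1 / 2 := by
      have h3 : c * ‖lam - lam0‖ ≤ c * (1 / (2 * (c + 1))) :=
        mul_le_mul_of_nonneg_left hδc hc0
      have h4 : c * (1 / (2 * (c + 1))) ≤ 1 / 2 := by
        rw [mul_one_div, div_le_div_iff₀ (by positivity) (by norm_num : (0:ℝ) < 2)]
        linarith
      linarith
    have h5 := mul_le_mul_of_nonneg_left h1 hc0
    have h6 := mul_le_mul_of_nonneg_right h2 (norm_nonneg (Ql x))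
    have h7 := mul_le_mul_of_nonneg_left hQFx hc0
    nlinarith [norm_nonneg (Ql x), norm_nonneg (lam - lam0)]
  -- combine
  have hsplit : ‖x‖ ≤ ‖Pl x‖ + ‖Ql x‖ := by
    conv_lhs => rw [← hPQ x]
    exact norm_add_le _ _
  have hμν1 : ‖lam - lam0‖ ^ ν ≤ 1 := pow_le_one₀ (norm_nonneg _) hμ1
  have hμν0 : 0 ≤ ‖lam - lam0‖ ^ ν := by positivity
  have key : ‖lam - lam0‖ ^ ν * ‖x‖
      ≤ (((ν : ℝ) * (1 + ‖Ncl‖) ^ ν * Cp + 2 * c * Cq + 1) * ‖F‖) * ‖x‖ := by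
    have s1 : ‖lam - lam0‖ ^ ν * ‖x‖ ≤ ‖lam - lam0‖ ^ ν * (‖Pl x‖ + ‖Ql x‖) :=
      mul_le_mul_of_nonneg_left hsplit hμν0
    have s2 : ‖lam - lam0‖ ^ ν * ‖Pl x‖ ≤ (ν : ℝ) * (1 + ‖Ncl‖) ^ ν * (Cp * (‖F‖ * ‖x‖)) := by
      calc ‖lam - lam0‖ ^ ν * ‖Pl x‖ = ‖lam - lam0‖ ^ ν * ‖Pl x‖ := rfl
        _ ≤ (ν : ℝ) * (1 + ‖Ncl‖) ^ ν * (Cp * (‖F‖ * ‖x‖)) := hyb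
    have s3 : ‖lam - lam0‖ ^ ν * ‖Ql x‖ ≤ 2 * c * (Cq * (‖F‖ * ‖x‖)) := by
      have := mul_le_mul hμν1 hzb (norm_nonneg _) zero_le_one
      simpa using this
    have hfx : 0 ≤ ‖F‖ * ‖x‖ := mul_nonneg hF0 (norm_nonneg x)
    nlinarith [s1, s2, s3, hfx]
  have final : ‖lam - lam0‖ ^ ν ≤ ((ν : ℝ) * (1 + ‖Ncl‖) ^ ν * Cp + 2 * c * Cq + 1) * ‖F‖ :=
    le_of_mul_le_mul_right key hxpos
  rw [hFnorm]
  exact final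
end

section
/- Let A⁰ be an n×n complex matrix and let λ⁰ be an eigenvalue of A⁰ of index ν. Then there exist constants c > 0 and δ > 0 such that for every w ∈ ℂ with 0 < |w| < δ there exists an n×n complex matrix E with ‖E‖ ≤ c|w|^ν such that λ⁰ + w is an eigenvalue of A⁰ + E. In particular, eigenvalue deviations of size proportional to ‖E‖^{1/ν} are realized by suitable perturbations. -/
lemma vecMulVec_mulVec' {n : ℕ} (a b : Fin n → ℂ) (z : Fin n → ℂ) :
    (Matrix.vecMulVec a b).mulVec z = (dotProduct b z) • a := by
  ext p
  simp only [Matrix.mulVec, Matrix.vecMulVec_apply, dotProduct, Pi.smul_apply,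
    smul_eq_mul, Finset.sum_mul, Finset.mul_sum]
  exact Finset.sum_congr rfl (fun j _ => by ring)

lemma coord_le_norm {n : ℕ} (z : EuclideanSpace ℂ (Fin n)) (i : Fin n) : ‖z i‖ ≤ ‖z‖ := by
  rw [EuclideanSpace.norm_eq]
  refine (Real.le_sqrt (norm_nonneg _) (by positivity)).mpr ?_
  exact Finset.single_le_sum (f := fun j => ‖z j‖ ^ 2) (fun j _ => sq_nonneg _)
    (Finset.mem_univ i)

lemma l2OpNorm_smul_vecMulVec_single {n : ℕ} (t : ℂ) (u : Fin n → ℂ) (i : Fin n) :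
    l2OpNorm (t • Matrix.vecMulVec u (Pi.single i 1)) ≤
      ‖t‖ * ‖(WithLp.equiv 2 (Fin n → ℂ)).symm u‖ := by
  unfold l2OpNorm
  refine ContinuousLinearMap.opNorm_le_bound _ (by positivity) (fun z => ?_)
  have hz : z = (WithLp.equiv 2 (Fin n → ℂ)).symm ((WithLp.equiv 2 (Fin n → ℂ)) z) := rfl
  have hcl : ∀ (M : Matrix (Fin n) (Fin n) ℂ) (y : Fin n → ℂ),
      Matrix.toEuclideanCLM (𝕜 := ℂ) M ((WithLp.equiv 2 (Fin n → ℂ)).symm y)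
        = (WithLp.equiv 2 (Fin n → ℂ)).symm (Matrix.toLin' M y) := fun _ _ => rfl
  rw [hz, hcl]
  set z' : Fin n → ℂ := (WithLp.equiv 2 (Fin n → ℂ)) z with hz'
  have hmul : Matrix.toLin' (t • Matrix.vecMulVec u (Pi.single i 1)) z'
      = (t * z' i) • u := by
    rw [Matrix.toLin'_apply, Matrix.smul_mulVec, vecMulVec_mulVec']
    have hdot : dotProduct (Pi.single i 1) z' = z' i := by
      simp [dotProduct, Pi.single_apply]
    rw [hdot, smul_smul]
  rw [hmul]
  have hsmul : (WithLp.equiv 2 (Fin n → ℂ)).symm ((t * z' i) • u)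
      = (t * z' i) • (WithLp.equiv 2 (Fin n → ℂ)).symm u := rfl
  rw [hsmul, norm_smul]
  have h1 : ‖t * z' i‖ ≤ ‖t‖ * ‖z‖ := by
    rw [norm_mul]
    have h2 : ‖z' i‖ ≤ ‖z‖ := coord_le_norm z i
    have h3 : ‖t‖ * ‖z' i‖ ≤ ‖t‖ * ‖z‖ := mul_le_mul_of_nonneg_left h2 (norm_nonneg _)
    exact h3
  calc ‖t * z' i‖ * ‖(WithLp.equiv 2 (Fin n → ℂ)).symm u‖
      ≤ (‖t‖ * ‖z‖) * ‖(WithLp.equiv 2 (Fin n → ℂ)).symm u‖ :=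
        mul_le_mul_of_nonneg_right h1 (norm_nonneg _)
    _ = ‖t‖ * ‖(WithLp.equiv 2 (Fin n → ℂ)).symm u‖ * ‖z‖ := by ring

/-- if `λ⁰` is an eigenvalue of `A⁰` of index `ν` (the smallest positive
integer for which `ker((A⁰ − λ⁰I)^ν) = ker((A⁰ − λ⁰I)^{ν+1})`), then every small
deviation `λ⁰ + w` is realized as an eigenvalue of some perturbation `A⁰ + E`
with `‖E‖ ≤ c|w|^ν`. -/
theorem perturbed_eigenvalue_attainability_at_index_nu
    {n : ℕ} (A0 : Matrix (Fin n) (Fin n) ℂ) (lam0 : ℂ) (ν : ℕ)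
    (heig : ∃ v : Fin n → ℂ, v ≠ 0 ∧ A0.mulVec v = lam0 • v)
    (hind : IsLeast {k : ℕ | 0 < k ∧ ∀ v : Fin n → ℂ,
        ((A0 - lam0 • (1 : Matrix (Fin n) (Fin n) ℂ)) ^ k).mulVec v = 0 ↔
        ((A0 - lam0 • (1 : Matrix (Fin n) (Fin n) ℂ)) ^ (k + 1)).mulVec v = 0} ν) :
    ∃ c > (0 : ℝ), ∃ δ > (0 : ℝ), ∀ w : ℂ, 0 < ‖w‖ → ‖w‖ < δ →
      ∃ E : Matrix (Fin n) (Fin n) ℂ, l2OpNorm E ≤ c * ‖w‖ ^ ν ∧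
        ∃ v : Fin n → ℂ, v ≠ 0 ∧ (A0 + E).mulVec v = (lam0 + w) • v := by
  classical
  set N : Matrix (Fin n) (Fin n) ℂ := A0 - lam0 • 1 with hNdef
  obtain ⟨⟨hν, hstab⟩, hleast⟩ := hind
  obtain ⟨m, rfl⟩ : ∃ m, ν = m + 1 := ⟨ν - 1, (Nat.succ_pred_eq_of_pos hν).symm⟩
  -- get a Jordan chain generator
  have key : ∃ u : Fin n → ℂ, (N ^ (m + 1)).mulVec u = 0 ∧ (N ^ m).mulVec u ≠ 0 := by
    rcases Nat.eq_zero_or_pos m with hm | hm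
    · subst hm
      obtain ⟨v, hv0, hv⟩ := heig
      refine ⟨v, ?_, by simpa using hv0⟩
      have hNv : N.mulVec v = 0 := by
        rw [hNdef, Matrix.sub_mulVec, hv, Matrix.smul_mulVec, Matrix.one_mulVec,
          sub_self]
      simpa using hNv
    · have hnot : m ∉ {k : ℕ | 0 < k ∧ ∀ v : Fin n → ℂ,
          (N ^ k).mulVec v = 0 ↔ (N ^ (k + 1)).mulVec v = 0} := by
        intro hmem
        exact absurd (hleast hmem) (by omega)
      simp only [Set.mem_setOf_eq, not_and, hm, true_implies, not_forall] at hnot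
      obtain ⟨v, hv⟩ := hnot
      have himp : (N ^ m).mulVec v = 0 → (N ^ (m + 1)).mulVec v = 0 := by
        intro h
        rw [pow_succ', ← Matrix.mulVec_mulVec, h, Matrix.mulVec_zero]
      exact ⟨v, by tauto, by tauto⟩
  obtain ⟨u, hu1, hu2⟩ := key
  -- pick a coordinate where the top chain vector is nonzero
  obtain ⟨i, hi⟩ := Function.ne_iff.mp hu2
  simp only [Pi.zero_apply] at hi
  set a : ℂ := (N ^ m).mulVec u i with ha
  set C : ℝ := ∑ j ∈ Finset.range m, ‖(N ^ (m - (j + 1))).mulVec u i‖ with hC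
  have hCnn : 0 ≤ C := Finset.sum_nonneg (fun j _ => norm_nonneg _)
  set uE : EuclideanSpace ℂ (Fin n) := (WithLp.equiv 2 (Fin n → ℂ)).symm u with huE
  set c : ℝ := 2 * ‖uE‖ / ‖a‖ + 1 with hc
  set δ : ℝ := min 1 (‖a‖ / (2 * (C + 1))) with hδ
  have hapos : 0 < ‖a‖ := by
    simpa [norm_pos_iff] using hi
  have hcpos : 0 < c := by
    rw [hc]
    positivity
  have hδpos : 0 < δ := by
    rw [hδ]
    refine lt_min one_pos (div_pos hapos (by linarith))
  refine ⟨c, hcpos, δ, hδpos, fun w hw0 hwδ => ?_⟩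
  have hw1 : ‖w‖ ≤ 1 := le_of_lt (lt_of_lt_of_le hwδ (min_le_left _ _))
  have hw2 : ‖w‖ < ‖a‖ / (2 * (C + 1)) :=
    lt_of_lt_of_le hwδ (min_le_right _ _)
  -- the approximate eigenvector
  set x : Fin n → ℂ := ∑ j ∈ Finset.range (m + 1), w ^ j • (N ^ (m - j)).mulVec u with hx
  set s : ℂ := ∑ j ∈ Finset.range m, w ^ (j + 1) * (N ^ (m - (j + 1))).mulVec u i with hs
  -- lower bound on |x i|
  have hxi_eq : x i = a + s := by
    have h1 : x i = ∑ j ∈ Finset.range (m + 1), w ^ j * (N ^ (m - j)).mulVec u i := by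
      rw [hx]
      simp [Finset.sum_apply]
    rw [h1, Finset.sum_range_succ', hs, ha]
    simp
    ring
  have htail : ‖s‖ ≤ ‖w‖ * C := by
    rw [hs]
    calc ‖∑ j ∈ Finset.range m, w ^ (j + 1) * (N ^ (m - (j + 1))).mulVec u i‖
        ≤ ∑ j ∈ Finset.range m, ‖w ^ (j + 1) * (N ^ (m - (j + 1))).mulVec u i‖ :=
          norm_sum_le _ _
      _ ≤ ∑ j ∈ Finset.range m, ‖w‖ * ‖(N ^ (m - (j + 1))).mulVec u i‖ := by
          refine Finset.sum_le_sum (fun j _ => ?_)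
          rw [norm_mul, norm_pow]
          have h1 : ‖w‖ ^ (j + 1) ≤ ‖w‖ := by
            have h2 := pow_le_pow_of_le_one (norm_nonneg w) hw1
              (show 1 ≤ j + 1 by omega)
            simpa using h2
          exact mul_le_mul_of_nonneg_right h1 (norm_nonneg _)
      _ = ‖w‖ * C := by rw [hC, Finset.mul_sum]
  have hxi : ‖a‖ / 2 ≤ ‖x i‖ := by
    have h10 : ‖a‖ ≤ ‖a + s‖ + ‖s‖ := by
      calc ‖a‖ = ‖(a + s) + (-s)‖ := by ring_nf
        _ ≤ ‖a + s‖ + ‖-s‖ := norm_add_le _ _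
        _ = ‖a + s‖ + ‖s‖ := by rw [norm_neg]
    have h4 : ‖w‖ * (C + 1) ≤ ‖a‖ / 2 := by
      have h5 := mul_le_mul_of_nonneg_right (le_of_lt hw2) (by linarith : (0:ℝ) ≤ C + 1)
      have h6 : ‖a‖ / (2 * (C + 1)) * (C + 1) = ‖a‖ / 2 := by
        field_simp
      linarith
    have h3 : ‖w‖ * C ≤ ‖a‖ / 2 := by
      nlinarith [norm_nonneg w]
    rw [hxi_eq]
    linarith
  have hxi0 : x i ≠ 0 := by
    intro h
    rw [h] at hxi
    simp only [norm_zero] at hxi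
    linarith
  have hx0 : x ≠ 0 := fun h => hxi0 (by rw [h]; rfl)
  -- the perturbation
  set t : ℂ := w ^ (m + 1) / x i with ht
  set E : Matrix (Fin n) (Fin n) ℂ := t • Matrix.vecMulVec u (Pi.single i 1) with hE
  refine ⟨E, ?_, x, hx0, ?_⟩
  · -- norm bound
    calc l2OpNorm E ≤ ‖t‖ * ‖uE‖ := l2OpNorm_smul_vecMulVec_single t u i
      _ ≤ c * ‖w‖ ^ (m + 1) := by
          rw [ht, norm_div, norm_pow]
          have hx2 : 0 < ‖x i‖ := lt_of_lt_of_le (by linarith) hxi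
          have h5 : ‖w‖ ^ (m + 1) / ‖x i‖ * ‖uE‖
              ≤ ‖w‖ ^ (m + 1) / (‖a‖ / 2) * ‖uE‖ := by
            apply mul_le_mul_of_nonneg_right _ (norm_nonneg _)
            exact div_le_div_of_nonneg_left (by positivity) (by linarith) hxi
          have h6 : ‖w‖ ^ (m + 1) / (‖a‖ / 2) * ‖uE‖
              = 2 * ‖uE‖ / ‖a‖ * ‖w‖ ^ (m + 1) := by
            field_simp
          have h7 : 2 * ‖uE‖ / ‖a‖ * ‖w‖ ^ (m + 1)
              ≤ c * ‖w‖ ^ (m + 1) := by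
            apply mul_le_mul_of_nonneg_right _ (by positivity)
            rw [hc]
            linarith
          linarith
  · -- eigen equation
    have hEx : E.mulVec x = w ^ (m + 1) • u := by
      rw [hE, Matrix.smul_mulVec, vecMulVec_mulVec']
      have hdot : dotProduct (Pi.single i 1) x = x i := by
        simp [dotProduct, Pi.single_apply]
      rw [hdot, smul_smul, ht, div_mul_cancel₀ _ hxi0]
    have hNx : N.mulVec x = w • x - w ^ (m + 1) • u := by
      have h6 : N.mulVec x = ∑ j ∈ Finset.range (m + 1),
          w ^ j • (N ^ (m - j + 1)).mulVec u := by
        rw [hx]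
        rw [show N.mulVec (∑ j ∈ Finset.range (m + 1), w ^ j • (N ^ (m - j)).mulVec u)
            = N.mulVecLin (∑ j ∈ Finset.range (m + 1), w ^ j • (N ^ (m - j)).mulVec u)
          from rfl]
        rw [map_sum]
        refine Finset.sum_congr rfl (fun j hj => ?_)
        rw [map_smul, Matrix.mulVecLin_apply, Matrix.mulVec_mulVec, ← pow_succ']
      have h7 : ∑ j ∈ Finset.range (m + 1), w ^ j • (N ^ (m - j + 1)).mulVec u
          = w • (x - w ^ m • u) := by
        rw [Finset.sum_range_succ']
        have hz : (N ^ (m - 0 + 1)).mulVec u = 0 := by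
          simpa using hu1
        rw [hz]
        have h8 : ∀ j ∈ Finset.range m,
            w ^ (j + 1) • (N ^ (m - (j + 1) + 1)).mulVec u
            = w • (w ^ j • (N ^ (m - j)).mulVec u) := by
          intro j hj
          have hjm : j < m := Finset.mem_range.mp hj
          have he : m - (j + 1) + 1 = m - j := by omega
          rw [he, smul_smul, ← pow_succ']
        rw [Finset.sum_congr rfl h8]
        have h9 : x - w ^ m • u = ∑ j ∈ Finset.range m, w ^ j • (N ^ (m - j)).mulVec u := by
          rw [hx, Finset.sum_range_succ]
          simp [Nat.sub_self]
        rw [h9, Finset.smul_sum]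
        simp
      rw [h6, h7, smul_sub, smul_smul, ← pow_succ']
    have hA0x : A0.mulVec x = lam0 • x + N.mulVec x := by
      rw [hNdef, Matrix.sub_mulVec, Matrix.smul_mulVec, Matrix.one_mulVec]
      abel
    rw [Matrix.add_mulVec, hA0x, hNx, hEx, add_smul]
    abel
end

section
/- Let A⁰ be an n×n complex matrix and let λ⁰ be an eigenvalue of A⁰ of index ν. Then there exist constants c > 0, C > 0, and δ > 0 such that for every ε with 0 < ε < δ: (i) every z ∈ ℂ with |z − λ⁰| < c·ε^{1/ν} belongs to σ_ε(A⁰), and (ii) every z ∈ σ_ε(A⁰) with |z − λ⁰| < δ satisfies |z − λ⁰| ≤ C·ε^{1/ν}. Thus the local ε-pseudospectrum around λ⁰ scales like ε^{1/ν} as ε → 0. -/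
set_option maxHeartbeats 8000000
set_option synthInstance.maxHeartbeats 1000000

open Polynomial Finset Matrix

namespace PSAux

variable {n : ℕ}

/-- geometric telescoping identity -/
lemma geom_mul (N : Matrix (Fin n) (Fin n) ℂ) (w : ℂ) (j : ℕ) :
    (N - w • 1) * (∑ k ∈ Finset.range j, w ^ (j - 1 - k) • N ^ k) = N ^ j - w ^ j • 1 := by
  induction j with
  | zero => simp
  | succ j ih =>
    have h1 : (∑ k ∈ Finset.range (j+1), w ^ (j + 1 - 1 - k) • N ^ k)
        = w • (∑ k ∈ Finset.range j, w ^ (j - 1 - k) • N ^ k) + N ^ j := by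
      rw [Finset.sum_range_succ, Finset.smul_sum]
      congr 1
      · refine Finset.sum_congr rfl fun k hk => ?_
        rw [Finset.mem_range] at hk
        rw [smul_smul, ← pow_succ']
        congr 2
        omega
      · simp
    rw [h1, mul_add, mul_smul_comm, ih]
    rw [sub_mul, smul_mul_assoc, one_mul, smul_sub, smul_smul, ← pow_succ', ← pow_succ']
    abel

/-- auxiliary quotient-like matrix -/
noncomputable def Q (N : Matrix (Fin n) (Fin n) ℂ) (p : ℂ[X]) (w : ℂ) :
    Matrix (Fin n) (Fin n) ℂ :=
  ∑ j ∈ Finset.range (p.natDegree + 1),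
    p.coeff j • ∑ k ∈ Finset.range j, w ^ (j - 1 - k) • N ^ k

lemma mul_Q (N : Matrix (Fin n) (Fin n) ℂ) (p : ℂ[X]) (w : ℂ) :
    (N - w • 1) * Q N p w = Polynomial.aeval N p - p.eval w • 1 := by
  rw [Q, Finset.mul_sum]
  rw [Polynomial.aeval_eq_sum_range (x := N), Polynomial.eval_eq_sum_range (x := w)]
  rw [Finset.sum_smul, ← Finset.sum_sub_distrib]
  refine Finset.sum_congr rfl fun j hj => ?_
  rw [mul_smul_comm, geom_mul, smul_sub, smul_smul]

lemma commute_Q (N : Matrix (Fin n) (Fin n) ℂ) (p : ℂ[X]) (w : ℂ) :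
    Commute (N - w • 1) (Q N p w) := by
  have hN : Commute N (Q N p w) := by
    apply Commute.sum_right
    intro j hj
    apply Commute.smul_right
    apply Commute.sum_right
    intro k hk
    exact Commute.smul_right ((Commute.refl N).pow_right k) _
  have h1 : Commute (w • (1 : Matrix (Fin n) (Fin n) ℂ)) (Q N p w) :=
    Commute.smul_left (Commute.one_left _) w
  exact hN.sub_left h1

lemma unit_and_inv (N : Matrix (Fin n) (Fin n) ℂ) (p : ℂ[X])
    (hp : Polynomial.aeval N p = 0) (w : ℂ) (hw : p.eval w ≠ 0) :
    IsUnit (N - w • 1) ∧ (N - w • 1)⁻¹ = (-(p.eval w)⁻¹) • Q N p w := by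
  have h1 : (N - w • 1) * ((-(p.eval w)⁻¹) • Q N p w) = 1 := by
    rw [mul_smul_comm, mul_Q, hp, zero_sub, smul_neg, smul_smul]
    rw [neg_mul, inv_mul_cancel₀ hw]
    simp
  have h2 : ((-(p.eval w)⁻¹) • Q N p w) * (N - w • 1) = 1 := by
    rw [smul_mul_assoc, ← (commute_Q N p w).eq, ← mul_smul_comm, h1]
  exact ⟨⟨⟨_, _, h1, h2⟩, rfl⟩, Matrix.inv_eq_right_inv h1⟩

lemma norm_Q_le (N : Matrix (Fin n) (Fin n) ℂ) (p : ℂ[X]) (w : ℂ) (hw : ‖w‖ ≤ 1) :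
    ‖Matrix.toEuclideanCLM (𝕜 := ℂ) (Q N p w)‖ ≤
      (∑ j ∈ Finset.range (p.natDegree + 1), ‖p.coeff j‖) *
        (p.natDegree * (max 1 ‖Matrix.toEuclideanCLM (𝕜 := ℂ) N‖) ^ p.natDegree) := by
  set φ := Matrix.toEuclideanCLM (𝕜 := ℂ) (n := Fin n) with hφ
  set M0 : ℝ := max 1 ‖φ N‖ with hM0def
  set d := p.natDegree with hd
  have hM0 : (1:ℝ) ≤ M0 := le_max_left _ _
  have hpowle : ∀ k, k ≤ d → ‖(φ N) ^ k‖ ≤ M0 ^ d := by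
    intro k hk
    rcases Nat.eq_zero_or_pos k with rfl | hkpos
    · calc ‖(φ N) ^ 0‖ = ‖(1 : EuclideanSpace ℂ (Fin n) →L[ℂ] EuclideanSpace ℂ (Fin n))‖ := by
            rw [pow_zero]
        _ ≤ 1 := by rw [ContinuousLinearMap.one_def]; exact ContinuousLinearMap.norm_id_le
        _ ≤ M0 ^ d := one_le_pow₀ hM0
    · calc ‖(φ N) ^ k‖ ≤ ‖φ N‖ ^ k := norm_pow_le' _ hkpos
        _ ≤ M0 ^ k := pow_le_pow_left₀ (norm_nonneg _) (le_max_right _ _) k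
        _ ≤ M0 ^ d := pow_le_pow_right₀ hM0 hk
  have hinner : ∀ j, j ∈ Finset.range (d + 1) →
      ‖φ (∑ k ∈ Finset.range j, w ^ (j - 1 - k) • N ^ k)‖ ≤ d * M0 ^ d := by
    intro j hj
    rw [Finset.mem_range] at hj
    have hj' : j ≤ d := by omega
    rw [map_sum]
    calc ‖∑ k ∈ Finset.range j, φ (w ^ (j - 1 - k) • N ^ k)‖
        ≤ ∑ k ∈ Finset.range j, ‖φ (w ^ (j - 1 - k) • N ^ k)‖ := norm_sum_le _ _
      _ ≤ ∑ k ∈ Finset.range j, M0 ^ d := by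
          refine Finset.sum_le_sum fun k hk => ?_
          rw [Finset.mem_range] at hk
          rw [_root_.map_smul, map_pow]
          calc ‖w ^ (j - 1 - k) • (φ N) ^ k‖
              ≤ ‖w ^ (j - 1 - k)‖ * ‖(φ N) ^ k‖ := ContinuousLinearMap.opNorm_smul_le _ _
            _ ≤ 1 * (M0 ^ d) := by
                apply mul_le_mul _ (hpowle k (by omega)) (norm_nonneg _) zero_le_one
                rw [norm_pow]
                exact pow_le_one₀ (norm_nonneg _) hw
            _ = M0 ^ d := one_mul _
      _ = j * M0 ^ d := by rw [Finset.sum_const, Finset.card_range, nsmul_eq_mul]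
      _ ≤ d * M0 ^ d := by
          apply mul_le_mul_of_nonneg_right _ (by positivity)
          exact_mod_cast Nat.cast_le.mpr hj'
  rw [Q, map_sum]
  calc ‖∑ j ∈ Finset.range (d + 1), φ (p.coeff j • ∑ k ∈ Finset.range j, w ^ (j-1-k) • N ^ k)‖
      ≤ ∑ j ∈ Finset.range (d + 1), ‖φ (p.coeff j • ∑ k ∈ Finset.range j, w ^ (j-1-k) • N ^ k)‖ :=
        norm_sum_le _ _
    _ ≤ ∑ j ∈ Finset.range (d + 1), ‖p.coeff j‖ * (d * M0 ^ d) := by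
        refine Finset.sum_le_sum fun j hj => ?_
        rw [_root_.map_smul]
        calc ‖p.coeff j • φ (∑ k ∈ Finset.range j, w ^ (j-1-k) • N ^ k)‖
            ≤ ‖p.coeff j‖ * ‖φ (∑ k ∈ Finset.range j, w ^ (j-1-k) • N ^ k)‖ :=
              ContinuousLinearMap.opNorm_smul_le _ _
          _ ≤ ‖p.coeff j‖ * (d * M0 ^ d) :=
              mul_le_mul_of_nonneg_left (hinner j hj) (norm_nonneg _)
    _ = (∑ j ∈ Finset.range (d + 1), ‖p.coeff j‖) * (d * M0 ^ d) := by
        rw [← Finset.sum_mul]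

lemma mulVec_eq_zero (B : Matrix (Fin n) (Fin n) ℂ) (hB : IsUnit B) (u : Fin n → ℂ)
    (h : B.mulVec u = 0) : u = 0 := by
  have hd := (Matrix.isUnit_iff_isUnit_det B).mp hB
  have h2 := congrArg (fun t => B⁻¹.mulVec t) h
  simpa [Matrix.mulVec_mulVec, Matrix.nonsing_inv_mul _ hd] using h2

lemma eq_zero_of_mulVec' (M : Matrix (Fin n) (Fin n) ℂ)
    (h : ∀ v : Fin n → ℂ, M.mulVec v = 0) : M = 0 := by
  ext i j
  have := congrFun (h (Pi.single j 1)) i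
  simpa [Matrix.mulVec_single] using this

lemma mulVec_sum (A : Matrix (Fin n) (Fin n) ℂ) (s : Finset ℕ) (f : ℕ → (Fin n → ℂ)) :
    A *ᵥ (∑ j ∈ s, f j) = ∑ j ∈ s, A *ᵥ f j := by
  rw [← Matrix.mulVecLin_apply, map_sum]
  simp [Matrix.mulVecLin_apply]

end PSAux
/-- The `ε`-pseudospectrum of a complex square matrix:
`{z : z ∈ σ(A), or A − zI is invertible and ‖(A − zI)⁻¹‖ > 1/ε}`. -/
noncomputable def pseudospectrum {n : ℕ} (ε : ℝ) (M : Matrix (Fin n) (Fin n) ℂ) : Set ℂ :=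
  {z : ℂ | z ∈ spectrum ℂ M ∨
    (IsUnit (M - z • (1 : Matrix (Fin n) (Fin n) ℂ)) ∧
      ε⁻¹ < l2OpNorm (M - z • (1 : Matrix (Fin n) (Fin n) ℂ))⁻¹)}

/-- at an eigenvalue `λ⁰` of index `ν`, the local `ε`-pseudospectrum
scales like `ε^{1/ν}`: it contains the disc of radius `c ε^{1/ν}` and is contained,
locally, in the disc of radius `C ε^{1/ν}`. -/
theorem pseudospectrum_scaling_at_exceptional_point
    {n : ℕ} (A0 : Matrix (Fin n) (Fin n) ℂ) (lam0 : ℂ) (ν : ℕ)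
    (heig : ∃ v : Fin n → ℂ, v ≠ 0 ∧ A0.mulVec v = lam0 • v)
    (hind : IsLeast {k : ℕ | 0 < k ∧ ∀ v : Fin n → ℂ,
        ((A0 - lam0 • (1 : Matrix (Fin n) (Fin n) ℂ)) ^ k).mulVec v = 0 ↔
        ((A0 - lam0 • (1 : Matrix (Fin n) (Fin n) ℂ)) ^ (k + 1)).mulVec v = 0} ν) :
    ∃ c > (0 : ℝ), ∃ C > (0 : ℝ), ∃ δ > (0 : ℝ), ∀ ε : ℝ, 0 < ε → ε < δ →
      (∀ z : ℂ, ‖z - lam0‖ < c * ε ^ ((ν : ℝ)⁻¹) → z ∈ pseudospectrum ε A0) ∧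
      (∀ z ∈ pseudospectrum ε A0, ‖z - lam0‖ < δ →
        ‖z - lam0‖ ≤ C * ε ^ ((ν : ℝ)⁻¹)) := by
  classical
  set N : Matrix (Fin n) (Fin n) ℂ := A0 - lam0 • 1 with hNdef
  obtain ⟨⟨hν, hiter⟩, hleast⟩ := hind
  obtain ⟨v0, hv0ne, hv0⟩ := heig
  have hνne : ν ≠ 0 := by omega
  have hNv0 : N *ᵥ v0 = 0 := by
    rw [hNdef, Matrix.sub_mulVec, hv0, Matrix.smul_mulVec, Matrix.one_mulVec, sub_self]
  -- kernels of powers of N stabilize from ν on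
  have hstab : ∀ (m : ℕ) (u : Fin n → ℂ), (N ^ (ν + m)) *ᵥ u = 0 → (N ^ ν) *ᵥ u = 0 := by
    intro m
    induction m with
    | zero => intro u h; simpa using h
    | succ m ih =>
      intro u h
      have h2 : (N ^ (ν + 1)) *ᵥ ((N ^ m) *ᵥ u) = 0 := by
        rw [Matrix.mulVec_mulVec, ← pow_add, show ν + 1 + m = ν + (m + 1) from by omega]
        exact h
      have h3 := (hiter ((N ^ m) *ᵥ u)).mpr h2
      rw [Matrix.mulVec_mulVec, ← pow_add] at h3
      exact ih u h3
  -- a generalized eigenvector of exact depth ν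
  obtain ⟨v, hvν, hvν1⟩ : ∃ v : Fin n → ℂ, (N ^ ν) *ᵥ v = 0 ∧ (N ^ (ν - 1)) *ᵥ v ≠ 0 := by
    rcases Nat.lt_or_ge 1 ν with h1 | h1
    · have hne : ν - 1 ∉ {k : ℕ | 0 < k ∧ ∀ v : Fin n → ℂ,
          (N ^ k) *ᵥ v = 0 ↔ (N ^ (k + 1)) *ᵥ v = 0} := by
        intro hmem
        have := hleast hmem
        omega
      simp only [Set.mem_setOf_eq, not_and] at hne
      have := hne (by omega)
      push_neg at this
      obtain ⟨v, hv⟩ := this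
      have himp : (N ^ (ν-1)) *ᵥ v = 0 → (N ^ (ν-1+1)) *ᵥ v = 0 := by
        intro h
        rw [pow_succ', ← Matrix.mulVec_mulVec, h, Matrix.mulVec_zero]
      have hq : (N ^ (ν-1+1)) *ᵥ v = 0 ∧ ¬ (N ^ (ν-1)) *ᵥ v = 0 := by tauto
      refine ⟨v, ?_, hq.2⟩
      have h2 := hq.1
      rwa [show ν - 1 + 1 = ν from by omega] at h2
    · have hν1 : ν = 1 := by omega
      refine ⟨v0, ?_, ?_⟩
      · rw [hν1, pow_one]; exact hNv0
      · rw [hν1]; simpa using hv0ne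
  -- the annihilating polynomial p = X^ν * g with g(0) ≠ 0
  have hchar0 : N.charpoly ≠ 0 := (Matrix.charpoly_monic N).ne_zero
  obtain ⟨g, hfact, hnd⟩ :=
    Polynomial.exists_eq_pow_rootMultiplicity_mul_and_not_dvd N.charpoly hchar0 0
  rw [map_zero, sub_zero] at hfact hnd
  set m := N.charpoly.rootMultiplicity 0 with hm
  have hg0 : g.eval 0 ≠ 0 := by
    intro h
    exact hnd (Polynomial.X_dvd_iff.mpr (by rwa [Polynomial.coeff_zero_eq_eval_zero]))
  set p : ℂ[X] := X ^ ν * g with hp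
  have hpN : Polynomial.aeval N p = 0 := by
    rcases le_or_gt m ν with hle | hlt
    · have hpe : p = X ^ (ν - m) * N.charpoly := by
        rw [hfact, ← mul_assoc, ← pow_add, show ν - m + m = ν from by omega]
      rw [hpe, _root_.map_mul, Matrix.aeval_self_charpoly, mul_zero]
    · apply PSAux.eq_zero_of_mulVec'
      intro u
      have hc : (N ^ m * Polynomial.aeval N g) *ᵥ u = 0 := by
        have hh := Matrix.aeval_self_charpoly N
        rw [hfact, _root_.map_mul, map_pow, Polynomial.aeval_X] at hh
        rw [hh, Matrix.zero_mulVec]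
      rw [← Matrix.mulVec_mulVec] at hc
      have hc2 : (N ^ (ν + (m - ν))) *ᵥ (Polynomial.aeval N g *ᵥ u) = 0 := by
        rwa [show ν + (m - ν) = m from by omega]
      have hc3 := hstab _ _ hc2
      show (Polynomial.aeval N p) *ᵥ u = 0
      rw [hp, _root_.map_mul, map_pow, Polynomial.aeval_X, ← Matrix.mulVec_mulVec]
      exact hc3
  have hpeval : ∀ w : ℂ, p.eval w = w ^ ν * g.eval w := by
    intro w; rw [hp]; simp
  -- constants
  set g0 : ℝ := ‖g.eval 0‖ with hg0def
  have hg0pos : 0 < g0 := norm_pos_iff.mpr hg0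
  obtain ⟨δh, hδhpos, hδh⟩ :=
    Metric.continuousAt_iff.mp (g.continuous.continuousAt) (g0 / 2) (half_pos hg0pos)
  have hglow : ∀ w : ℂ, ‖w‖ < δh → g0 / 2 ≤ ‖g.eval w‖ := by
    intro w hw
    have h1 : dist (g.eval w) (g.eval 0) < g0 / 2 := hδh (by rwa [dist_zero_right])
    rw [dist_eq_norm] at h1
    have h2 : ‖g.eval 0‖ - ‖g.eval w‖ ≤ ‖g.eval w - g.eval 0‖ := by
      rw [norm_sub_rev]; exact norm_sub_norm_le _ _
    rw [← hg0def] at h2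
    linarith
  set L : EuclideanSpace ℂ (Fin n) ≃ₗ[ℂ] (Fin n → ℂ) := WithLp.linearEquiv 2 ℂ (Fin n → ℂ)
    with hLdef
  have hLapp : ∀ (M : Matrix (Fin n) (Fin n) ℂ) (u : Fin n → ℂ),
      Matrix.toEuclideanCLM (𝕜 := ℂ) M (L.symm u) = L.symm (M *ᵥ u) := fun M u => rfl
  have hLpos : ∀ u : Fin n → ℂ, u ≠ 0 → 0 < ‖L.symm u‖ := by
    intro u hu
    rw [norm_pos_iff]
    intro h
    exact hu (by simpa using congrArg L h)
  set b : ℝ := ‖L.symm ((N ^ (ν - 1)) *ᵥ v)‖ with hbdef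
  have hb : 0 < b := hLpos _ hvν1
  set S : ℝ := ∑ j ∈ Finset.range (ν - 1), ‖L.symm ((N ^ j) *ᵥ v)‖ with hSdef
  have hS0 : 0 ≤ S := Finset.sum_nonneg fun _ _ => norm_nonneg _
  have hvne : v ≠ 0 := fun h => hvν1 (by rw [h, Matrix.mulVec_zero])
  have hEv : 0 < ‖L.symm v‖ := hLpos _ hvne
  set K : ℝ := (∑ j ∈ Finset.range (p.natDegree + 1), ‖p.coeff j‖) *
      (p.natDegree * (max 1 ‖Matrix.toEuclideanCLM (𝕜 := ℂ) N‖) ^ p.natDegree) with hKdef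
  have hK0 : 0 ≤ K := by
    rw [hKdef]
    exact mul_nonneg (Finset.sum_nonneg fun _ _ => norm_nonneg _)
      (mul_nonneg (Nat.cast_nonneg _)
        (pow_nonneg (le_trans zero_le_one (le_max_left _ _)) _))
  set Kup : ℝ := 2 * K / g0 + 1 with hKup
  have hKuppos : 0 < Kup := by
    have h1 : 0 ≤ 2 * K / g0 := div_nonneg (by linarith) (le_of_lt hg0pos)
    rw [hKup]; linarith
  set alow : ℝ := (b / 2) / ‖L.symm v‖ with halow
  have halowpos : 0 < alow := div_pos (half_pos hb) hEv
  set δ1 : ℝ := min 1 (min δh (b / (2 * (S + 1)))) with hδ1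
  have hδ1pos : 0 < δ1 := lt_min one_pos (lt_min hδhpos (div_pos hb (by linarith)))
  have hδ1le1 : δ1 ≤ 1 := min_le_left _ _
  set c : ℝ := min δ1 (min alow 1) with hc
  have hcpos : 0 < c := lt_min hδ1pos (lt_min halowpos one_pos)
  set Cup : ℝ := max 1 Kup with hCup
  have hCpos : 0 < Cup := lt_of_lt_of_le one_pos (le_max_left _ _)
  -- the key resolvent estimate
  have hmain : ∀ w : ℂ, w ≠ 0 → ‖w‖ < δ1 →
      IsUnit (N - w • 1) ∧
      alow * (‖w‖⁻¹) ^ ν ≤ ‖Matrix.toEuclideanCLM (𝕜 := ℂ) (n := Fin n) ((N - w • 1)⁻¹)‖ ∧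
      ‖Matrix.toEuclideanCLM (𝕜 := ℂ) (n := Fin n) ((N - w • 1)⁻¹)‖ ≤ Kup * (‖w‖⁻¹) ^ ν := by
    intro w hw0 hwδ
    have hw1 : ‖w‖ ≤ 1 := le_of_lt (lt_of_lt_of_le hwδ (min_le_left _ _))
    have hwδh : ‖w‖ < δh :=
      lt_of_lt_of_le hwδ (le_trans (min_le_right _ _) (min_le_left _ _))
    have hwb : ‖w‖ ≤ b / (2 * (S + 1)) :=
      le_of_lt (lt_of_lt_of_le hwδ (le_trans (min_le_right _ _) (min_le_right _ _)))
    have hwpos : 0 < ‖w‖ := norm_pos_iff.mpr hw0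
    have hgw : g0 / 2 ≤ ‖g.eval w‖ := hglow w hwδh
    have hgwne : g.eval w ≠ 0 := by
      intro h; rw [h, norm_zero] at hgw; linarith
    have hpw : p.eval w ≠ 0 := by
      rw [hpeval]; exact mul_ne_zero (pow_ne_zero _ hw0) hgwne
    obtain ⟨hunit, hinv⟩ := PSAux.unit_and_inv N p hpN w hpw
    refine ⟨hunit, ?_, ?_⟩
    · -- lower bound
      set x : Fin n → ℂ := ∑ j ∈ Finset.range ν, (-(w⁻¹ ^ (j+1))) • ((N ^ j) *ᵥ v) with hx
      have hBx : (N - w • 1) *ᵥ x = v := by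
        rw [hx, PSAux.mulVec_sum]
        have hterm : ∀ j : ℕ, (N - w • 1) *ᵥ ((-(w⁻¹ ^ (j+1))) • ((N ^ j) *ᵥ v))
            = (w⁻¹ ^ j) • ((N ^ j) *ᵥ v) - (w⁻¹ ^ (j+1)) • ((N ^ (j+1)) *ᵥ v) := by
          intro j
          have hcoef : w⁻¹ ^ (j+1) * w = w⁻¹ ^ j := by
            rw [pow_succ, mul_assoc, inv_mul_cancel₀ hw0, mul_one]
          rw [Matrix.mulVec_smul, Matrix.sub_mulVec, Matrix.mulVec_mulVec, ← pow_succ',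
            Matrix.smul_mulVec, Matrix.one_mulVec, ← hcoef]
          module
        calc ∑ j ∈ Finset.range ν, (N - w • 1) *ᵥ ((-(w⁻¹ ^ (j+1))) • ((N ^ j) *ᵥ v))
            = ∑ j ∈ Finset.range ν,
              ((w⁻¹ ^ j) • ((N ^ j) *ᵥ v) - (w⁻¹ ^ (j+1)) • ((N ^ (j+1)) *ᵥ v)) :=
              Finset.sum_congr rfl fun j _ => hterm j
          _ = (w⁻¹ ^ 0) • ((N ^ 0) *ᵥ v) - (w⁻¹ ^ ν) • ((N ^ ν) *ᵥ v) :=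
              Finset.sum_range_sub' (fun j => (w⁻¹ ^ j) • ((N ^ j) *ᵥ v)) ν
          _ = v := by rw [hvν, smul_zero, sub_zero, pow_zero, pow_zero, Matrix.one_mulVec,
              one_smul]
      have hRv : (N - w • 1)⁻¹ *ᵥ v = x := by
        have hd := (Matrix.isUnit_iff_isUnit_det _).mp hunit
        rw [← hBx, Matrix.mulVec_mulVec, Matrix.nonsing_inv_mul _ hd, Matrix.one_mulVec]
      -- lower bound on ‖x‖
      have hinv1 : 1 ≤ ‖w⁻¹‖ := by
        rw [norm_inv]
        exact (one_le_inv₀ hwpos).mpr hw1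
      have hysplit : x = (∑ j ∈ Finset.range (ν-1), (-(w⁻¹ ^ (j+1))) • ((N ^ j) *ᵥ v))
          + (-(w⁻¹ ^ ν)) • ((N ^ (ν-1)) *ᵥ v) := by
        rw [hx]
        rw [show ν = ν - 1 + 1 from by omega, Finset.sum_range_succ,
          show ν - 1 + 1 = ν from by omega]
      have hy : ‖L.symm (∑ j ∈ Finset.range (ν-1), (-(w⁻¹ ^ (j+1))) • ((N ^ j) *ᵥ v))‖
          ≤ ‖w⁻¹‖ ^ (ν - 1) * S := by
        rw [map_sum]
        calc ‖∑ j ∈ Finset.range (ν-1), L.symm ((-(w⁻¹ ^ (j+1))) • ((N ^ j) *ᵥ v))‖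
            ≤ ∑ j ∈ Finset.range (ν-1), ‖L.symm ((-(w⁻¹ ^ (j+1))) • ((N ^ j) *ᵥ v))‖ :=
              norm_sum_le _ _
          _ ≤ ∑ j ∈ Finset.range (ν-1), ‖w⁻¹‖ ^ (ν-1) * ‖L.symm ((N ^ j) *ᵥ v)‖ := by
              refine Finset.sum_le_sum fun j hj => ?_
              rw [Finset.mem_range] at hj
              rw [_root_.map_smul, norm_smul, norm_neg, norm_pow]
              exact mul_le_mul_of_nonneg_right
                (pow_le_pow_right₀ hinv1 (by omega)) (norm_nonneg _)
          _ = ‖w⁻¹‖ ^ (ν-1) * S := by rw [hSdef, Finset.mul_sum]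
      have haterm : ‖L.symm ((-(w⁻¹ ^ ν)) • ((N ^ (ν-1)) *ᵥ v))‖ = ‖w⁻¹‖ ^ ν * b := by
        rw [_root_.map_smul, norm_smul, norm_neg, norm_pow, hbdef]
      have hxlow : ‖w⁻¹‖ ^ ν * (b / 2) ≤ ‖L.symm x‖ := by
        have hsplit2 : L.symm x
            = L.symm (∑ j ∈ Finset.range (ν-1), (-(w⁻¹ ^ (j+1))) • ((N ^ j) *ᵥ v))
              + L.symm ((-(w⁻¹ ^ ν)) • ((N ^ (ν-1)) *ᵥ v)) := by
          rw [hysplit, map_add]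
        have htri : ‖L.symm ((-(w⁻¹ ^ ν)) • ((N ^ (ν-1)) *ᵥ v))‖
            ≤ ‖L.symm x‖
              + ‖L.symm (∑ j ∈ Finset.range (ν-1), (-(w⁻¹ ^ (j+1))) • ((N ^ j) *ᵥ v))‖ := by
          rw [hsplit2]
          have := norm_sub_le (L.symm (∑ j ∈ Finset.range (ν-1), (-(w⁻¹ ^ (j+1))) • ((N ^ j) *ᵥ v))
              + L.symm ((-(w⁻¹ ^ ν)) • ((N ^ (ν-1)) *ᵥ v)))
              (L.symm (∑ j ∈ Finset.range (ν-1), (-(w⁻¹ ^ (j+1))) • ((N ^ j) *ᵥ v)))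
          simpa [add_sub_cancel_left] using this
        have hwS : ‖w‖ * S ≤ b / 2 := by
          have h4 : ‖w‖ * (2 * (S + 1)) ≤ b := by
            rw [← le_div_iff₀ (by linarith : (0:ℝ) < 2 * (S + 1))]
            exact hwb
          nlinarith
        have hconv : ‖w⁻¹‖ ^ (ν-1) * S = ‖w⁻¹‖ ^ ν * (‖w‖ * S) := by
          have e : ν - 1 + 1 = ν := by omega
          conv_rhs => rw [← e, pow_succ]
          rw [norm_inv, mul_assoc, inv_mul_cancel_left₀ (ne_of_gt hwpos)]
        have h5 : ‖w⁻¹‖ ^ ν * b - ‖w⁻¹‖ ^ (ν-1) * S ≤ ‖L.symm x‖ := by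
          rw [haterm] at htri
          linarith [hy]
        rw [hconv] at h5
        have h6 : ‖w⁻¹‖ ^ ν * (b / 2) ≤ ‖w⁻¹‖ ^ ν * b - ‖w⁻¹‖ ^ ν * (‖w‖ * S) := by
          have hp1 : (0:ℝ) < ‖w⁻¹‖ ^ ν := pow_pos (by rw [norm_inv]; exact inv_pos.mpr hwpos) ν
          nlinarith
        linarith
      -- transfer to the operator norm
      have hop : ‖L.symm x‖ ≤
          ‖Matrix.toEuclideanCLM (𝕜 := ℂ) (n := Fin n) ((N - w • 1)⁻¹)‖ * ‖L.symm v‖ := by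
        calc ‖L.symm x‖
            = ‖Matrix.toEuclideanCLM (𝕜 := ℂ) (n := Fin n) ((N - w • 1)⁻¹) (L.symm v)‖ := by
              rw [hLapp, hRv]
          _ ≤ _ := ContinuousLinearMap.le_opNorm _ _
      rw [halow, div_mul_eq_mul_div, div_le_iff₀ hEv]
      calc b / 2 * (‖w‖⁻¹) ^ ν = ‖w⁻¹‖ ^ ν * (b / 2) := by rw [norm_inv]; ring
        _ ≤ ‖L.symm x‖ := hxlow
        _ ≤ _ := hop
    · -- upper bound
      rw [hinv]
      have hQ := PSAux.norm_Q_le N p w hw1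
      rw [← hKdef] at hQ
      have hpwn : (g0/2) * ‖w‖ ^ ν ≤ ‖p.eval w‖ := by
        rw [hpeval, norm_mul, norm_pow]
        calc (g0/2) * ‖w‖ ^ ν = ‖w‖ ^ ν * (g0/2) := by ring
          _ ≤ ‖w‖ ^ ν * ‖g.eval w‖ := mul_le_mul_of_nonneg_left hgw (by positivity)
      calc ‖Matrix.toEuclideanCLM (𝕜 := ℂ) ((-(p.eval w)⁻¹) • PSAux.Q N p w)‖
          ≤ ‖(-(p.eval w)⁻¹ : ℂ)‖ * ‖Matrix.toEuclideanCLM (𝕜 := ℂ) (PSAux.Q N p w)‖ := by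
            rw [_root_.map_smul]
            exact ContinuousLinearMap.opNorm_smul_le _ _
        _ = ‖p.eval w‖⁻¹ * ‖Matrix.toEuclideanCLM (𝕜 := ℂ) (PSAux.Q N p w)‖ := by
            rw [norm_neg, norm_inv]
        _ ≤ ‖p.eval w‖⁻¹ * K := mul_le_mul_of_nonneg_left hQ (by positivity)
        _ ≤ ((g0/2) * ‖w‖ ^ ν)⁻¹ * K := by
            apply mul_le_mul_of_nonneg_right _ hK0
            exact inv_anti₀ (mul_pos (half_pos hg0pos) (pow_pos hwpos ν)) hpwn
        _ = (2 * K / g0) * (‖w‖⁻¹) ^ ν := by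
            rw [mul_inv, inv_pow]
            field_simp
        _ ≤ Kup * (‖w‖⁻¹) ^ ν := by
            apply mul_le_mul_of_nonneg_right _ (by positivity)
            rw [hKup]
            linarith
  -- conclusion
  refine ⟨c, hcpos, Cup, hCpos, δ1, hδ1pos, fun ε hε hεδ => ?_⟩
  have hεle1 : ε ≤ 1 := le_of_lt (lt_of_lt_of_le hεδ hδ1le1)
  have hεp : 0 < ε ^ ((ν : ℝ)⁻¹) := Real.rpow_pos_of_pos hε _
  have hεple1 : ε ^ ((ν : ℝ)⁻¹) ≤ 1 :=
    Real.rpow_le_one (le_of_lt hε) hεle1 (by positivity)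
  have hpowval : (ε ^ ((ν : ℝ)⁻¹)) ^ ν = ε := Real.rpow_inv_natCast_pow hε.le hνne
  constructor
  · -- containment of the disc
    intro z hz
    by_cases hzl : z = lam0
    · left
      rw [hzl, spectrum.mem_iff]
      intro hu
      rw [Algebra.algebraMap_eq_smul_one] at hu
      have h0 : (lam0 • 1 - A0) *ᵥ v0 = 0 := by
        have he : lam0 • (1 : Matrix (Fin n) (Fin n) ℂ) - A0 = -N := by
          rw [hNdef]; abel
        rw [he, Matrix.neg_mulVec, hNv0, neg_zero]
      exact hv0ne (PSAux.mulVec_eq_zero _ hu v0 h0)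
    · set w : ℂ := z - lam0 with hw
      have hw0 : w ≠ 0 := sub_ne_zero.mpr hzl
      have hwpos : 0 < ‖w‖ := norm_pos_iff.mpr hw0
      have hwδ1 : ‖w‖ < δ1 := by
        calc ‖w‖ < c * ε ^ ((ν : ℝ)⁻¹) := hz
          _ ≤ δ1 * 1 := mul_le_mul (min_le_left _ _) hεple1 (le_of_lt hεp) (le_of_lt hδ1pos)
          _ = δ1 := mul_one _
      obtain ⟨hunit, hlow, _⟩ := hmain w hw0 hwδ1
      have heq : A0 - z • 1 = N - w • 1 := by
        rw [hNdef, hw, sub_smul]; abel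
      right
      constructor
      · rw [heq]; exact hunit
      · rw [heq, l2OpNorm]
        refine lt_of_lt_of_le ?_ hlow
        -- ε⁻¹ < alow * (‖w‖⁻¹) ^ ν
        have hwlt : ‖w‖ ^ ν < alow * ε := by
          have h1 : ‖w‖ ^ ν < (c * ε ^ ((ν : ℝ)⁻¹)) ^ ν :=
            pow_lt_pow_left₀ hz (norm_nonneg _) hνne
          have h2 : (c * ε ^ ((ν : ℝ)⁻¹)) ^ ν = c ^ ν * ε := by
            rw [mul_pow, hpowval]
          have h3 : c ^ ν ≤ alow := by
            calc c ^ ν ≤ c := pow_le_of_le_one (le_of_lt hcpos)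
                  (le_trans (min_le_right _ _) (min_le_right _ _)) hνne
              _ ≤ alow := le_trans (min_le_right _ _) (min_le_left _ _)
          calc ‖w‖ ^ ν < c ^ ν * ε := by rw [← h2]; exact h1
            _ ≤ alow * ε := mul_le_mul_of_nonneg_right h3 (le_of_lt hε)
        rw [inv_pow, ← div_eq_mul_inv, lt_div_iff₀ (pow_pos hwpos ν)]
        calc ε⁻¹ * ‖w‖ ^ ν < ε⁻¹ * (alow * ε) :=
              mul_lt_mul_of_pos_left hwlt (inv_pos.mpr hε)
          _ = alow := by
              rw [mul_comm alow ε, ← mul_assoc, inv_mul_cancel₀ (ne_of_gt hε), one_mul]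
  · -- local confinement
    intro z hzps hzδ
    set w : ℂ := z - lam0 with hw
    by_cases hw0 : w = 0
    · rw [hw0, norm_zero]
      exact le_of_lt (mul_pos hCpos hεp)
    · have hwδ1 : ‖w‖ < δ1 := hzδ
      have hwpos : 0 < ‖w‖ := norm_pos_iff.mpr hw0
      obtain ⟨hunit, _, hup⟩ := hmain w hw0 hwδ1
      have heq : A0 - z • 1 = N - w • 1 := by
        rw [hNdef, hw, sub_smul]; abel
      rcases hzps with hsp | ⟨_, hn⟩
      · exfalso
        rw [spectrum.mem_iff] at hsp
        apply hsp
        rw [Algebra.algebraMap_eq_smul_one]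
        have he : z • (1 : Matrix (Fin n) (Fin n) ℂ) - A0 = -(N - w • 1) := by
          rw [← heq]; abel
        rw [he]
        exact hunit.neg
      · rw [heq, l2OpNorm] at hn
        have hn2 : ε⁻¹ < Kup * (‖w‖⁻¹) ^ ν := lt_of_lt_of_le hn hup
        have hn3 : ‖w‖ ^ ν < Kup * ε := by
          rw [inv_pow, ← div_eq_mul_inv, lt_div_iff₀ (pow_pos hwpos ν)] at hn2
          have h3 : ε * (ε⁻¹ * ‖w‖ ^ ν) = ‖w‖ ^ ν := by
            rw [← mul_assoc, mul_inv_cancel₀ (ne_of_gt hε), one_mul]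
          calc ‖w‖ ^ ν = ε * (ε⁻¹ * ‖w‖ ^ ν) := h3.symm
            _ < ε * Kup := by
                exact mul_lt_mul_of_pos_left hn2 hε
            _ = Kup * ε := mul_comm _ _
        have hKC : Kup ≤ Cup ^ ν := le_trans (le_max_right 1 Kup)
          (le_self_pow₀ (le_max_left 1 Kup) hνne)
        have hfin : ‖w‖ ^ ν ≤ (Cup * ε ^ ((ν : ℝ)⁻¹)) ^ ν := by
          rw [mul_pow, hpowval]
          calc ‖w‖ ^ ν ≤ Kup * ε := le_of_lt hn3
            _ ≤ Cup ^ ν * ε := mul_le_mul_of_nonneg_right hKC (le_of_lt hε)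
        exact le_of_pow_le_pow_left₀ hνne (le_of_lt (mul_pos hCpos hεp)) hfin
end

section
/- For every ε > 0 and every z ∈ ℂ, z belongs to the ε-pseudospectrum σ_ε(A(0)) if and only if |z|² < ε(1 + ε). That is, the ε-pseudospectrum of A(0) = [[0,1],[0,0]] is the open disc centered at the coalesced eigenvalue 0 with radius √(ε(1+ε)); in particular its radius scales as ε^{1/2} as ε → 0. -/
/-- The paper's toy-model matrix `A(x) = [[x, 1], [x, −x]]`. -/
def toyA (x : ℂ) : Matrix (Fin 2) (Fin 2) ℂ := !![x, 1; x, -x]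

/-! ### Auxiliary lemmas -/

private lemma norm_withLp_symm (w : Fin 2 → ℂ) :
    ‖(WithLp.equiv 2 (Fin 2 → ℂ)).symm w‖
      = Real.sqrt (‖w 0‖ ^ 2 + ‖w 1‖ ^ 2) := by
  rw [EuclideanSpace.norm_eq]
  simp [Fin.sum_univ_two]

private lemma toyA_sub_smul (z : ℂ) :
    toyA 0 - z • (1 : Matrix (Fin 2) (Fin 2) ℂ) = !![-z, 1; 0, -z] := by
  ext i j
  fin_cases i <;> fin_cases j <;> simp [toyA, Matrix.one_apply]

private lemma isUnit_toyA_sub (z : ℂ) (hz : z ≠ 0) :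
    IsUnit (toyA 0 - z • (1 : Matrix (Fin 2) (Fin 2) ℂ)) := by
  rw [toyA_sub_smul, Matrix.isUnit_iff_isUnit_det]
  simp [Matrix.det_fin_two_of, isUnit_iff_ne_zero, hz]

private lemma toyA_inv (z : ℂ) (hz : z ≠ 0) :
    (toyA 0 - z • (1 : Matrix (Fin 2) (Fin 2) ℂ))⁻¹
      = !![-z⁻¹, -(z⁻¹) ^ 2; 0, -z⁻¹] := by
  rw [toyA_sub_smul]
  apply Matrix.inv_eq_right_inv
  ext i j
  fin_cases i <;> fin_cases j <;>
    simp [Matrix.mul_apply, Fin.sum_univ_two, Matrix.one_apply, hz] <;> field_simp <;> ring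

private lemma key_poly (ε r p q : ℝ) (hε : 0 < ε) (hr : 0 < r) (hu : ε * (1 + ε) ≤ r ^ 2) :
    ε ^ 2 * (r * p + q) ^ 2 + ε ^ 2 * r ^ 2 * q ^ 2 ≤ r ^ 4 * (p ^ 2 + q ^ 2) := by
  have hA : 0 < r ^ 4 - ε ^ 2 * r ^ 2 := by nlinarith
  have hf : 0 ≤ r ^ 2 * (r ^ 2 * (r ^ 2 - (ε ^ 2 + ε)) * (r ^ 2 - (ε ^ 2 - ε))) * q ^ 2 := by
    have h1 : 0 ≤ r ^ 2 - (ε ^ 2 + ε) := by nlinarith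
    have h2 : 0 ≤ r ^ 2 - (ε ^ 2 - ε) := by nlinarith
    positivity
  nlinarith [sq_nonneg ((r ^ 4 - ε ^ 2 * r ^ 2) * p - ε ^ 2 * r * q), hA, hf, sq_nonneg q,
    mul_pos hA hA]

private lemma key_up (ε r p q a b : ℝ) (hε : 0 < ε) (hr : 0 < r)
    (hu : ε * (1 + ε) ≤ r ^ 2) (hp : 0 ≤ p) (hq : 0 ≤ q) (ha0 : 0 ≤ a)
    (ha : a ≤ r⁻¹ * p + (r⁻¹) ^ 2 * q) (hb : b = r⁻¹ * q) :
    a ^ 2 + b ^ 2 ≤ (ε⁻¹) ^ 2 * (p ^ 2 + q ^ 2) := by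
  have hr2 : (0:ℝ) < r ^ 2 := by positivity
  have h1 : a * r ^ 2 ≤ r * p + q := by
    have := mul_le_mul_of_nonneg_right ha hr2.le
    calc a * r ^ 2 ≤ (r⁻¹ * p + (r⁻¹) ^ 2 * q) * r ^ 2 := this
      _ = r * p + q := by field_simp
  have h2 : a ^ 2 * r ^ 4 ≤ (r * p + q) ^ 2 := by
    have hrp : 0 ≤ r * p + q := le_trans (by positivity) h1
    nlinarith [mul_le_mul h1 h1 (by positivity) hrp]
  have hb2 : b ^ 2 * r ^ 2 = q ^ 2 := by rw [hb]; field_simp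
  have key := key_poly ε r p q hε hr hu
  rw [inv_pow, ← div_eq_inv_mul, le_div_iff₀ (by positivity : (0:ℝ) < ε ^ 2)]
  have hb4 : b ^ 2 * r ^ 4 = q ^ 2 * r ^ 2 := by
    rw [show b ^ 2 * r ^ 4 = b ^ 2 * r ^ 2 * r ^ 2 by ring, hb2]
  have hb5 : ε ^ 2 * (b ^ 2 * r ^ 4) = ε ^ 2 * (q ^ 2 * r ^ 2) := by rw [hb4]
  have h4 : (a ^ 2 + b ^ 2) * ε ^ 2 * r ^ 4 ≤ (p ^ 2 + q ^ 2) * r ^ 4 := by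
    nlinarith [mul_le_mul_of_nonneg_left h2 (by positivity : (0:ℝ) ≤ ε ^ 2), hb5, key]
  have hr4 : (0:ℝ) < r ^ 4 := by positivity
  exact (mul_le_mul_iff_of_pos_right hr4).mp h4

private lemma apply_CLM (M : Matrix (Fin 2) (Fin 2) ℂ) (v : EuclideanSpace ℂ (Fin 2)) :
    Matrix.toEuclideanCLM (𝕜 := ℂ) M v
      = (WithLp.equiv 2 (Fin 2 → ℂ)).symm (M.mulVec (WithLp.equiv 2 (Fin 2 → ℂ) v)) := by
  rfl

private lemma norm_inv_le (ε : ℝ) (z : ℂ) (hε : 0 < ε) (hz : z ≠ 0)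
    (h : ε * (1 + ε) ≤ ‖z‖ ^ 2) :
    l2OpNorm !![-z⁻¹, -(z⁻¹) ^ 2; 0, -z⁻¹] ≤ ε⁻¹ := by
  set r := ‖z‖ with hrdef
  have hr : 0 < r := by simpa [hrdef] using norm_pos_iff.mpr hz
  apply ContinuousLinearMap.opNorm_le_bound _ (by positivity)
  intro v
  rw [apply_CLM]
  set w := (WithLp.equiv 2 (Fin 2 → ℂ)) v with hw
  have hv : v = (WithLp.equiv 2 (Fin 2 → ℂ)).symm w := by simp [hw]
  rw [hv, norm_withLp_symm, norm_withLp_symm]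
  set p := ‖w 0‖ with hp
  set q := ‖w 1‖ with hq
  have e0 : (Matrix.mulVec !![-z⁻¹, -(z⁻¹) ^ 2; 0, -z⁻¹] w) 0
      = -z⁻¹ * w 0 + -(z⁻¹) ^ 2 * w 1 := by
    simp [Matrix.mulVec, dotProduct, Fin.sum_univ_two]
  have e1 : (Matrix.mulVec !![-z⁻¹, -(z⁻¹) ^ 2; 0, -z⁻¹] w) 1 = -z⁻¹ * w 1 := by
    simp [Matrix.mulVec, dotProduct, Fin.sum_univ_two]
  have ha : ‖(Matrix.mulVec !![-z⁻¹, -(z⁻¹) ^ 2; 0, -z⁻¹] w) 0‖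
      ≤ r⁻¹ * p + (r⁻¹) ^ 2 * q := by
    rw [e0]
    calc ‖-z⁻¹ * w 0 + -(z⁻¹) ^ 2 * w 1‖
        ≤ ‖-z⁻¹ * w 0‖ + ‖-(z⁻¹) ^ 2 * w 1‖ :=
          norm_add_le _ _
      _ = r⁻¹ * p + (r⁻¹) ^ 2 * q := by
          simp [norm_mul, norm_pow, norm_inv, hrdef, hp, hq]
  have hb : ‖(Matrix.mulVec !![-z⁻¹, -(z⁻¹) ^ 2; 0, -z⁻¹] w) 1‖ = r⁻¹ * q := by
    rw [e1]
    simp [norm_mul, norm_inv, hrdef, hq]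
  have key := key_up ε r p q
    (‖(Matrix.mulVec !![-z⁻¹, -(z⁻¹) ^ 2; 0, -z⁻¹] w) 0‖)
    (‖(Matrix.mulVec !![-z⁻¹, -(z⁻¹) ^ 2; 0, -z⁻¹] w) 1‖)
    hε hr h (by positivity) (by positivity) (by positivity) ha hb
  have hrw : ε⁻¹ * Real.sqrt (p ^ 2 + q ^ 2)
      = Real.sqrt ((ε⁻¹) ^ 2 * (p ^ 2 + q ^ 2)) := by
    rw [Real.sqrt_mul (by positivity), Real.sqrt_sq (by positivity)]
  rw [hrw]
  exact Real.sqrt_le_sqrt key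

private lemma norm_inv_gt_aux (ε : ℝ) (z : ℂ) (hε : 0 < ε) (hz : z ≠ 0) (p q : ℝ)
    (hpq : ‖z‖ ^ 2 * p ^ 2 + ‖z‖ ^ 4 * q ^ 2
      < ε ^ 2 * ((p + q) ^ 2 + ‖z‖ ^ 2 * q ^ 2)) :
    ε⁻¹ < l2OpNorm !![-z⁻¹, -(z⁻¹) ^ 2; 0, -z⁻¹] := by
  set r := ‖z‖ with hrdef
  have hr : 0 < r := by simpa [hrdef] using norm_pos_iff.mpr hz
  set v : EuclideanSpace ℂ (Fin 2) :=
    (WithLp.equiv 2 (Fin 2 → ℂ)).symm ![-z * (p : ℂ), -z ^ 2 * (q : ℂ)] with hvdef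
  have hnv : ‖v‖ = Real.sqrt (r ^ 2 * p ^ 2 + r ^ 4 * q ^ 2) := by
    rw [hvdef, norm_withLp_symm]
    congr 1
    simp [norm_mul, norm_pow, Complex.norm_real, Real.norm_eq_abs, hrdef]
    rw [mul_pow, mul_pow, sq_abs, sq_abs]
    ring
  have hTv : ‖Matrix.toEuclideanCLM (𝕜 := ℂ) !![-z⁻¹, -(z⁻¹) ^ 2; 0, -z⁻¹] v‖
      = Real.sqrt ((p + q) ^ 2 + r ^ 2 * q ^ 2) := by
    rw [apply_CLM, hvdef]
    rw [Equiv.apply_symm_apply, norm_withLp_symm]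
    have e0 : (Matrix.mulVec !![-z⁻¹, -(z⁻¹) ^ 2; 0, -z⁻¹] ![-z * (p : ℂ), -z ^ 2 * (q : ℂ)]) 0
        = (p : ℂ) + q := by
      simp only [Matrix.mulVec, dotProduct, Fin.sum_univ_two]
      simp
      try field_simp
      try ring
    have e1 : (Matrix.mulVec !![-z⁻¹, -(z⁻¹) ^ 2; 0, -z⁻¹] ![-z * (p : ℂ), -z ^ 2 * (q : ℂ)]) 1
        = z * q := by
      simp only [Matrix.mulVec, dotProduct, Fin.sum_univ_two]
      simp
      try field_simp
      try ring
    rw [e0, e1]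
    congr 1
    have : ((p : ℂ) + q) = ((p + q : ℝ) : ℂ) := by push_cast; ring
    rw [this, Complex.norm_real, Real.norm_eq_abs, sq_abs, norm_mul, Complex.norm_real, Real.norm_eq_abs, mul_pow, sq_abs, hrdef]
  have hlt : ε⁻¹ * ‖v‖ < ‖Matrix.toEuclideanCLM (𝕜 := ℂ) !![-z⁻¹, -(z⁻¹) ^ 2; 0, -z⁻¹] v‖ := by
    rw [hnv, hTv]
    have hrw : ε⁻¹ * Real.sqrt (r ^ 2 * p ^ 2 + r ^ 4 * q ^ 2)
        = Real.sqrt ((ε⁻¹) ^ 2 * (r ^ 2 * p ^ 2 + r ^ 4 * q ^ 2)) := by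
      rw [Real.sqrt_mul (by positivity), Real.sqrt_sq (by positivity)]
    rw [hrw]
    apply Real.sqrt_lt_sqrt (by positivity)
    rw [inv_pow, ← div_eq_inv_mul, div_lt_iff₀ (by positivity : (0:ℝ) < ε ^ 2)]
    nlinarith [hpq]
  have hle := ContinuousLinearMap.le_opNorm
    (Matrix.toEuclideanCLM (𝕜 := ℂ) !![-z⁻¹, -(z⁻¹) ^ 2; 0, -z⁻¹]) v
  have hmul : ε⁻¹ * ‖v‖ < l2OpNorm !![-z⁻¹, -(z⁻¹) ^ 2; 0, -z⁻¹] * ‖v‖ :=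
    lt_of_lt_of_le hlt hle
  have hvpos : 0 < ‖v‖ := by
    rcases (norm_nonneg v).lt_or_eq with h | h
    · exact h
    · exfalso; rw [← h] at hmul; simp at hmul
  exact (mul_lt_mul_iff_of_pos_right hvpos).mp hmul

private lemma norm_inv_gt (ε : ℝ) (z : ℂ) (hε : 0 < ε) (hz : z ≠ 0)
    (h : ‖z‖ ^ 2 < ε * (1 + ε)) :
    ε⁻¹ < l2OpNorm !![-z⁻¹, -(z⁻¹) ^ 2; 0, -z⁻¹] := by
  set r := ‖z‖ with hrdef
  have hr : 0 < r := by simpa [hrdef] using norm_pos_iff.mpr hz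
  rcases le_or_gt (r ^ 2) (ε ^ 2) with hc | hc
  · -- take p = 0, q = 1
    apply norm_inv_gt_aux ε z hε hz 0 1
    rw [← hrdef]
    nlinarith
  · -- take p = ε², q = r² − ε²
    apply norm_inv_gt_aux ε z hε hz (ε ^ 2) (r ^ 2 - ε ^ 2)
    rw [← hrdef]
    have h1 : r ^ 2 - ε ^ 2 < ε := by nlinarith
    have h2 : 0 < r ^ 2 - ε ^ 2 := by nlinarith
    have h1' : 0 < ε - (r ^ 2 - ε ^ 2) := by linarith
    have h3' : 0 < ε + (r ^ 2 - ε ^ 2) := by linarith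
    have h0 : (0:ℝ) < r ^ 2 := by positivity
    nlinarith [mul_pos (mul_pos (mul_pos h0 h2) h1') h3']

/-- the `ε`-pseudospectrum of `A(0) = [[0,1],[0,0]]` is exactly the open
disc `{z : |z|² < ε(1 + ε)}` centered at the coalesced eigenvalue `0`. -/
theorem toy_model_pseudospectrum_at_EP_zero (ε : ℝ) (hε : 0 < ε) (z : ℂ) :
    z ∈ pseudospectrum ε (toyA 0) ↔ ‖z‖ ^ 2 < ε * (1 + ε) := by
  by_cases hz : z = 0
  · subst hz
    constructor
    · intro _
      simpa using (by positivity : (0:ℝ) < ε * (1 + ε))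
    · intro _
      left
      rw [spectrum.mem_iff]
      intro hcon
      rw [map_zero, zero_sub, IsUnit.neg_iff, Matrix.isUnit_iff_isUnit_det] at hcon
      simp [toyA, Matrix.det_fin_two_of] at hcon
  · have hnotspec : z ∉ spectrum ℂ (toyA 0) := by
      rw [spectrum.mem_iff]
      push_neg
      have : (algebraMap ℂ (Matrix (Fin 2) (Fin 2) ℂ)) z - toyA 0 = !![z, -1; 0, z] := by
        ext i j
        fin_cases i <;> fin_cases j <;> simp [toyA, Matrix.algebraMap_matrix_apply]
      rw [this, Matrix.isUnit_iff_isUnit_det]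
      simp [Matrix.det_fin_two_of, isUnit_iff_ne_zero, hz]
    constructor
    · rintro (h | ⟨_, h⟩)
      · exact absurd h hnotspec
      · rw [toyA_inv z hz] at h
        by_contra hge
        push_neg at hge
        exact absurd h (not_lt.mpr (norm_inv_le ε z hε hz hge))
    · intro h
      right
      refine ⟨isUnit_toyA_sub z hz, ?_⟩
      rw [toyA_inv z hz]
      exact norm_inv_gt ε z hε hz h
end

section
/- For every ε > 0 and every z ∈ ℂ, z belongs to the ε-pseudospectrum σ_ε(A(−1)) if and only if |z|² < ε(2 + ε). That is, the ε-pseudospectrum of A(−1) = [[−1,1],[−1,1]] is the open disc centered at the coalesced eigenvalue 0 with radius √(ε(2+ε)); in particular its radius scales as ε^{1/2} as ε → 0. -/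
set_option maxHeartbeats 1000000

/-- forward real core -/
lemma core_forward (ε zr zi s p q u v : ℝ) (hε : 0 < ε)
    (hs : s ^ 2 = 1 + zr ^ 2 + zi ^ 2) (hs0 : 0 ≤ s)
    (hge : ε * (2 + ε) ≤ zr ^ 2 + zi ^ 2) :
    ε ^ 2 * (p ^ 2 + q ^ 2 + u ^ 2 + v ^ 2) ≤
      ((-1 - zr) * p + zi * q + u) ^ 2 + ((-1 - zr) * q - zi * p + v) ^ 2 +
        ((-p) + (1 - zr) * u + zi * v) ^ 2 + ((-q) + (1 - zr) * v - zi * u) ^ 2 := by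
  have hs1 : 1 + ε ≤ s := by by_contra h; push_neg at h; nlinarith
  have hfac : (s + zr) * (s - zr) = 1 + zi ^ 2 := by linear_combination hs
  have ha : 0 < s + zr := by nlinarith [sq_nonneg zi]
  have hid : (s + zr) * (((-1 - zr) * p + zi * q + u) ^ 2 + ((-1 - zr) * q - zi * p + v) ^ 2 +
        ((-p) + (1 - zr) * u + zi * v) ^ 2 + ((-q) + (1 - zr) * v - zi * u) ^ 2) =
      (s + zr) * (s - 1) ^ 2 * (p ^ 2 + q ^ 2 + u ^ 2 + v ^ 2) +
        2 * (((s + zr) * p - u - zi * v) ^ 2 + ((s + zr) * q + zi * u - v) ^ 2) := by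
    linear_combination (2 * u ^ 2 + 2 * v ^ 2 - (zr + s) * (p ^ 2 + q ^ 2 + u ^ 2 + v ^ 2)) * hs
  have hdiff : 0 ≤ (s - 1) ^ 2 - ε ^ 2 := by nlinarith
  have hW : (0:ℝ) ≤ p ^ 2 + q ^ 2 + u ^ 2 + v ^ 2 := by positivity
  nlinarith [sq_nonneg ((s + zr) * p - u - zi * v), sq_nonneg ((s + zr) * q + zi * u - v),
    mul_nonneg (mul_nonneg ha.le hdiff) hW, hid]

/-- witness real core -/
lemma core_witness (ε zr zi s : ℝ) (hε : 0 < ε)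
    (hs : s ^ 2 = 1 + zr ^ 2 + zi ^ 2) (hs0 : 0 ≤ s)
    (hlt : zr ^ 2 + zi ^ 2 < ε * (2 + ε)) :
    ((-1 - zr) * 1 + zi * (-zi) + (s + zr)) ^ 2 + ((-1 - zr) * (-zi) - zi * 1 + 0) ^ 2 +
        ((-1) + (1 - zr) * (s + zr) + zi * 0) ^ 2 + ((- -zi) + (1 - zr) * 0 - zi * (s + zr)) ^ 2 <
      ε ^ 2 * (1 ^ 2 + (-zi) ^ 2 + (s + zr) ^ 2 + 0 ^ 2) := by
  have hid : ((-1 - zr) * 1 + zi * (-zi) + (s + zr)) ^ 2 + ((-1 - zr) * (-zi) - zi * 1 + 0) ^ 2 +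
        ((-1) + (1 - zr) * (s + zr) + zi * 0) ^ 2 + ((- -zi) + (1 - zr) * 0 - zi * (s + zr)) ^ 2 =
      (s - 1) ^ 2 * (1 ^ 2 + (-zi) ^ 2 + (s + zr) ^ 2 + 0 ^ 2) := by
    linear_combination (-1 - zi ^ 2 + 2 * zr - zr ^ 2 + 2 * s - 2 * s * zr - s ^ 2) * hs
  rw [hid]
  have hs1 : 1 ≤ s := by nlinarith
  have hslt : s < 1 + ε := by nlinarith
  have hfac : (s + zr) * (s - zr) = 1 + zi ^ 2 := by linear_combination hs
  have ha : 0 < s + zr := by nlinarith [sq_nonneg zi]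
  have hWpos : (0:ℝ) < 1 ^ 2 + (-zi) ^ 2 + (s + zr) ^ 2 + 0 ^ 2 := by positivity
  have : (s - 1) ^ 2 < ε ^ 2 := by nlinarith
  nlinarith

lemma normSq_comp (z a b : ℂ) :
    Complex.normSq ((-1 - z) * a + b) =
      ((-1 - z.re) * a.re + z.im * a.im + b.re) ^ 2 +
        ((-1 - z.re) * a.im - z.im * a.re + b.im) ^ 2 := by
  simp [Complex.normSq_apply, Complex.add_re, Complex.add_im, Complex.mul_re, Complex.mul_im,
    Complex.sub_re, Complex.sub_im, Complex.neg_re, Complex.neg_im, Complex.one_re, Complex.one_im]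
  ring

lemma normSq_comp2 (z a b : ℂ) :
    Complex.normSq (-a + (1 - z) * b) =
      (-a.re + (1 - z.re) * b.re + z.im * b.im) ^ 2 +
        (-a.im + (1 - z.re) * b.im - z.im * b.re) ^ 2 := by
  simp [Complex.normSq_apply, Complex.add_re, Complex.add_im, Complex.mul_re, Complex.mul_im,
    Complex.sub_re, Complex.sub_im, Complex.neg_re, Complex.neg_im, Complex.one_re, Complex.one_im]
  ring

lemma det_C (z : ℂ) : (toyA (-1) - z • (1 : Matrix (Fin 2) (Fin 2) ℂ)).det = z ^ 2 := by
  simp [toyA, Matrix.det_fin_two, Matrix.one_apply]; ring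

lemma spectrum_toyA (z : ℂ) : z ∈ spectrum ℂ (toyA (-1)) ↔ z = 0 := by
  rw [spectrum.mem_iff, Algebra.algebraMap_eq_smul_one, Matrix.isUnit_iff_isUnit_det]
  have h : (z • (1 : Matrix (Fin 2) (Fin 2) ℂ) - toyA (-1)).det = z ^ 2 := by
    simp [toyA, Matrix.det_fin_two, Matrix.one_apply]; ring
  rw [h, isUnit_iff_ne_zero]
  simp [pow_eq_zero_iff]

lemma C_entries (z : ℂ) :
    toyA (-1) - z • (1 : Matrix (Fin 2) (Fin 2) ℂ) = !![-1 - z, 1; -1, 1 - z] := by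
  ext i j
  fin_cases i <;> fin_cases j <;> simp [toyA, Matrix.one_apply]

/-- squared-norm form of the vector condition -/
lemma sq_condition (ε : ℝ) (hε : 0 < ε) (z : ℂ) :
    (∃ w : EuclideanSpace ℂ (Fin 2),
        ‖Matrix.toEuclideanCLM (𝕜 := ℂ) (toyA (-1) - z • (1 : Matrix (Fin 2) (Fin 2) ℂ)) w‖
          < ε * ‖w‖) ↔ ‖z‖ ^ 2 < ε * (2 + ε) := by
  set C := toyA (-1) - z • (1 : Matrix (Fin 2) (Fin 2) ℂ) with hCdef
  -- components of the image
  have hcw : ∀ w : EuclideanSpace ℂ (Fin 2), ∀ i,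
      (Matrix.toEuclideanCLM (𝕜 := ℂ) C) w i = C.mulVec (fun j => w j) i := by
    intro w i
    have h := congrFun (Matrix.ofLp_toEuclideanCLM (𝕜 := ℂ) C w) i
    simpa [Matrix.toLin'_apply] using h
  have hmv : ∀ w : EuclideanSpace ℂ (Fin 2),
      (Matrix.toEuclideanCLM (𝕜 := ℂ) C) w 0 = (-1 - z) * w 0 + w 1 ∧
      (Matrix.toEuclideanCLM (𝕜 := ℂ) C) w 1 = -(w 0) + (1 - z) * w 1 := by
    intro w
    have hCE : C = !![-1 - z, 1; -1, 1 - z] := C_entries z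
    constructor
    · rw [hcw w 0, hCE]
      simp [Matrix.mulVec, dotProduct, Fin.sum_univ_two]
    · rw [hcw w 1, hCE]
      simp [Matrix.mulVec, dotProduct, Fin.sum_univ_two]
  -- squared norms
  have hnorm : ∀ w : EuclideanSpace ℂ (Fin 2),
      (‖Matrix.toEuclideanCLM (𝕜 := ℂ) C w‖ < ε * ‖w‖ ↔
        Complex.normSq ((-1 - z) * w 0 + w 1) + Complex.normSq (-(w 0) + (1 - z) * w 1) <
          ε ^ 2 * (Complex.normSq (w 0) + Complex.normSq (w 1))) := by
    intro w
    obtain ⟨h0, h1⟩ := hmv w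
    rw [EuclideanSpace.norm_eq, EuclideanSpace.norm_eq]
    rw [Fin.sum_univ_two, Fin.sum_univ_two, h0, h1]
    have hsq : ∀ c : ℂ, ‖c‖ ^ 2 = Complex.normSq c := by
      intro c; rw [Complex.sq_norm]
    rw [hsq, hsq, hsq, hsq]
    rw [show ε * Real.sqrt (Complex.normSq (w 0) + Complex.normSq (w 1)) =
        Real.sqrt (ε ^ 2 * (Complex.normSq (w 0) + Complex.normSq (w 1))) by
      rw [Real.sqrt_mul (sq_nonneg ε), Real.sqrt_sq hε.le]]
    exact Real.sqrt_lt_sqrt_iff (add_nonneg (Complex.normSq_nonneg _) (Complex.normSq_nonneg _))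
  have habs : ‖z‖ ^ 2 = z.re ^ 2 + z.im ^ 2 := by
    rw [Complex.sq_norm, Complex.normSq_apply]; ring
  -- the sqrt witness
  set s : ℝ := Real.sqrt (1 + z.re ^ 2 + z.im ^ 2) with hsdef
  have hs0 : 0 ≤ s := Real.sqrt_nonneg _
  have hs : s ^ 2 = 1 + z.re ^ 2 + z.im ^ 2 := Real.sq_sqrt (by positivity)
  constructor
  · rintro ⟨w, hw⟩
    rw [hnorm w] at hw
    by_contra hge
    push_neg at hge
    rw [habs] at hge
    have := core_forward ε z.re z.im s (w 0).re (w 0).im (w 1).re (w 1).im hε hs hs0 hge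
    rw [normSq_comp, normSq_comp2, Complex.normSq_apply, Complex.normSq_apply] at hw
    nlinarith
  · intro hlt
    rw [habs] at hlt
    refine ⟨(WithLp.equiv 2 (Fin 2 → ℂ)).symm ![⟨1, -z.im⟩, ⟨s + z.re, 0⟩], ?_⟩
    set w : EuclideanSpace ℂ (Fin 2) :=
      (WithLp.equiv 2 (Fin 2 → ℂ)).symm ![⟨1, -z.im⟩, ⟨s + z.re, 0⟩] with hwdef
    rw [hnorm w]
    have hw0 : w 0 = ⟨1, -z.im⟩ := rfl
    have hw1 : w 1 = ⟨s + z.re, 0⟩ := rfl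
    rw [hw0, hw1, normSq_comp, normSq_comp2, Complex.normSq_apply, Complex.normSq_apply]
    have hkey := core_witness ε z.re z.im s hε hs hs0 hlt
    have e1 : (⟨1, -z.im⟩ : ℂ).re = 1 := rfl
    have e2 : (⟨1, -z.im⟩ : ℂ).im = -z.im := rfl
    have e3 : (⟨s + z.re, 0⟩ : ℂ).re = s + z.re := rfl
    have e4 : (⟨s + z.re, 0⟩ : ℂ).im = 0 := rfl
    rw [e1, e2, e3, e4]
    nlinarith

/-- the `ε`-pseudospectrum of `A(−1) = [[−1,1],[−1,1]]` is exactly the open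
disc `{z : |z|² < ε(2 + ε)}` centered at the coalesced eigenvalue `0`. -/
theorem toy_model_pseudospectrum_at_EP_neg_one (ε : ℝ) (hε : 0 < ε) (z : ℂ) :
    z ∈ pseudospectrum ε (toyA (-1)) ↔ ‖z‖ ^ 2 < ε * (2 + ε) := by
  by_cases hz : z = 0
  · subst hz
    refine iff_of_true (Or.inl ((spectrum_toyA 0).mpr rfl)) ?_
    simp only [norm_zero]
    nlinarith
  · set C := toyA (-1) - z • (1 : Matrix (Fin 2) (Fin 2) ℂ) with hCdef
    have hdet : IsUnit C.det := by
      rw [det_C]; exact isUnit_iff_ne_zero.2 (pow_ne_zero _ hz)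
    have hCunit : IsUnit C := (Matrix.isUnit_iff_isUnit_det C).mpr hdet
    have h1 : C * C⁻¹ = 1 := Matrix.mul_nonsing_inv C hdet
    have h2 : C⁻¹ * C = 1 := Matrix.nonsing_inv_mul C hdet
    have he1 : ∀ x, Matrix.toEuclideanCLM (𝕜 := ℂ) C (Matrix.toEuclideanCLM (𝕜 := ℂ) C⁻¹ x) = x := by
      intro x
      rw [← ContinuousLinearMap.mul_apply, ← map_mul, h1, map_one, ContinuousLinearMap.one_apply]
    have he2 : ∀ x, Matrix.toEuclideanCLM (𝕜 := ℂ) C⁻¹ (Matrix.toEuclideanCLM (𝕜 := ℂ) C x) = x := by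
      intro x
      rw [← ContinuousLinearMap.mul_apply, ← map_mul, h2, map_one, ContinuousLinearMap.one_apply]
    have key : (ε⁻¹ < l2OpNorm C⁻¹) ↔
        ∃ w : EuclideanSpace ℂ (Fin 2), ‖Matrix.toEuclideanCLM (𝕜 := ℂ) C w‖ < ε * ‖w‖ := by
      rw [show (ε⁻¹ < l2OpNorm C⁻¹) ↔ ¬(l2OpNorm C⁻¹ ≤ ε⁻¹) from not_le.symm]
      rw [l2OpNorm, ContinuousLinearMap.opNorm_le_iff (by positivity)]
      push_neg
      constructor
      · rintro ⟨x, hx⟩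
        refine ⟨Matrix.toEuclideanCLM (𝕜 := ℂ) C⁻¹ x, ?_⟩
        rw [he1]
        exact (inv_mul_lt_iff₀ hε).mp hx
      · rintro ⟨w, hw⟩
        refine ⟨Matrix.toEuclideanCLM (𝕜 := ℂ) C w, ?_⟩
        rw [he2]
        exact (inv_mul_lt_iff₀ hε).mpr hw
    have hspec : z ∉ spectrum ℂ (toyA (-1)) := fun h => hz ((spectrum_toyA z).mp h)
    rw [pseudospectrum, Set.mem_setOf_eq]
    rw [← sq_condition ε hε z, ← hCdef, ← key]
    constructor
    · rintro (h | ⟨-, h⟩)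
      · exact absurd h hspec
      · exact h
    · intro h
      exact Or.inr ⟨hCunit, h⟩
end

section
/- Fix 0 < r < 1 and consider the loop x(s) = r·e^{2πis}, s ∈ [0,1], encircling the exceptional point x = 0 once. Define λ(s) = √r · e^{iπs} · exp(½ Log(1 + r e^{2πis})), where Log is the principal branch of the complex logarithm (well-defined since Re(1 + r e^{2πis}) > 0). Then λ is continuous on [0,1], λ(s)² = x(s) + x(s)² for all s (so λ(s) is an eigenvalue of A(x(s)) for every s), λ(0) ≠ 0, and λ(1) = −λ(0). Hence the two eigenvalues of A(x) exchange after one traversal of a loop around the exceptional point. -/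
/-- along the loop `x(s) = r e^{2πis}` (with `0 < r < 1`) encircling the
exceptional point `x = 0` once, the continuous eigenvalue branch
`λ(s) = √r e^{iπs} exp(½ Log(1 + r e^{2πis}))` satisfies `λ(s)² = x(s) + x(s)²` (so
`λ(s)` is an eigenvalue of `A(x(s))`), `λ(0) ≠ 0`, and `λ(1) = −λ(0)`: the two
eigenvalues exchange after one traversal of the loop. -/
theorem toy_model_eigenvalue_exchange_around_EP
    (r : ℝ) (hr0 : 0 < r) (hr1 : r < 1)
    (x : ℝ → ℂ) (hx : ∀ s : ℝ, x s = (r : ℂ) * Complex.exp (2 * (Real.pi : ℂ) * Complex.I * (s : ℂ)))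
    (lam : ℝ → ℂ)
    (hlam : ∀ s : ℝ, lam s = (Real.sqrt r : ℂ) * Complex.exp ((Real.pi : ℂ) * Complex.I * (s : ℂ)) *
        Complex.exp ((1 / 2 : ℂ) *
          Complex.log (1 + (r : ℂ) * Complex.exp (2 * (Real.pi : ℂ) * Complex.I * (s : ℂ))))) :
    ContinuousOn lam (Set.Icc (0 : ℝ) 1) ∧
    (∀ s : ℝ, (lam s) ^ 2 = x s + (x s) ^ 2) ∧
    (∀ s : ℝ, ∃ v : Fin 2 → ℂ, v ≠ 0 ∧ (toyA (x s)).mulVec v = lam s • v) ∧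
    lam 0 ≠ 0 ∧
    lam 1 = -lam 0 := by
  -- |x s| = r
  have habs : ∀ s : ℝ, ‖x s‖ = r := by
    intro s
    rw [hx s]
    rw [norm_mul, Complex.norm_exp]
    have : (2 * (Real.pi : ℂ) * Complex.I * (s : ℂ)).re = 0 := by simp
    rw [this]
    simp [abs_of_pos hr0]
  have hre : ∀ s : ℝ, 0 < (1 + x s).re := by
    intro s
    have := Complex.abs_re_le_norm (x s)
    rw [habs s] at this
    have hx1 : -1 < (x s).re := by
      have : -(r:ℝ) ≤ (x s).re := by linarith [neg_abs_le ((x s).re), abs_le.mp this]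
      linarith
    simp [Complex.add_re]
    linarith
  have hne : ∀ s : ℝ, 1 + x s ≠ 0 := by
    intro s h
    have := hre s
    rw [h] at this
    simp at this
  -- key squaring identity
  have hsq : ∀ s : ℝ, (lam s) ^ 2 = x s + (x s) ^ 2 := by
    intro s
    rw [hlam s, ← hx s]
    rw [mul_pow, mul_pow, ← Complex.exp_nat_mul, ← Complex.exp_nat_mul]
    have h1 : ((2:ℕ):ℂ) * ((Real.pi : ℂ) * Complex.I * (s : ℂ)) = 2 * (Real.pi : ℂ) * Complex.I * (s : ℂ) := by ring
    have h2 : ((2:ℕ):ℂ) * ((1/2 : ℂ) * Complex.log (1 + x s)) = Complex.log (1 + x s) := by ring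
    rw [h1, h2, Complex.exp_log (hne s)]
    have hsr : ((Real.sqrt r : ℂ)) ^ 2 = (r : ℂ) := by
      norm_cast
      exact Real.sq_sqrt hr0.le
    rw [hsr, ← hx s]
    ring
  refine ⟨?_, hsq, ?_, ?_, ?_⟩
  · -- continuity
    apply Continuous.continuousOn
    have hcont : Continuous fun s : ℝ => 1 + (r : ℂ) * Complex.exp (2 * (Real.pi : ℂ) * Complex.I * (s : ℂ)) := by
      continuity
    have hlog : Continuous fun s : ℝ => Complex.log (1 + (r : ℂ) * Complex.exp (2 * (Real.pi : ℂ) * Complex.I * (s : ℂ))) := by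
      apply continuous_iff_continuousAt.mpr
      intro s
      apply ContinuousAt.clog hcont.continuousAt
      rw [Complex.mem_slitPlane_iff]
      left
      have := hre s
      rw [hx s] at this
      exact this
    have : lam = fun s : ℝ => (Real.sqrt r : ℂ) * Complex.exp ((Real.pi : ℂ) * Complex.I * (s : ℂ)) *
        Complex.exp ((1 / 2 : ℂ) *
          Complex.log (1 + (r : ℂ) * Complex.exp (2 * (Real.pi : ℂ) * Complex.I * (s : ℂ)))) := funext hlam
    rw [this]
    exact ((continuous_const.mul (Complex.continuous_exp.comp (by continuity))).mul
      (Complex.continuous_exp.comp (continuous_const.mul hlog)))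
  · -- eigenvector
    intro s
    refine ⟨![1, lam s - x s], ?_, ?_⟩
    · intro h
      have := congrFun h 0
      simp at this
    · funext i
      fin_cases i
      · simp [toyA, Matrix.mulVec, dotProduct, Fin.sum_univ_two]
      · simp [toyA, Matrix.mulVec, dotProduct, Fin.sum_univ_two]
        linear_combination -hsq s
  · -- lam 0 ≠ 0
    rw [hlam 0]
    apply mul_ne_zero
    apply mul_ne_zero
    · simp [Real.sqrt_ne_zero'.mpr hr0]
    · exact Complex.exp_ne_zero _
    · exact Complex.exp_ne_zero _
  · -- lam 1 = - lam 0
    rw [hlam 0, hlam 1]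
    have e1 : Complex.exp ((Real.pi : ℂ) * Complex.I * ((1:ℝ) : ℂ)) = -1 := by
      push_cast
      rw [mul_one]
      exact Complex.exp_pi_mul_I
    have e2 : Complex.exp (2 * (Real.pi : ℂ) * Complex.I * ((1:ℝ) : ℂ)) = 1 := by
      push_cast
      rw [mul_one]
      exact Complex.exp_two_pi_mul_I
    have e3 : Complex.exp (2 * (Real.pi : ℂ) * Complex.I * ((0:ℝ) : ℂ)) = 1 := by
      push_cast
      simp
    have e4 : Complex.exp ((Real.pi : ℂ) * Complex.I * ((0:ℝ) : ℂ)) = 1 := by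
      push_cast
      simp
    rw [e1, e2, e3, e4]
    ring
end
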